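/- arXiv:0802.1094 — 9 statements merged into one kernel-verified Lean document; each statement's English description precedes it below -/
import Mathlib

section
/- Let t and n be natural numbers with t > 1 and n > 1. Then there exists a prime r dividing t^n − 1 that does not divide t^i − 1 for any 1 ≤ i < n, except exactly in the following cases: (n,t) = (6,2), or n = 2 and t = 2^l − 1 for some l ≥ 2. -/
/-!
Let `Φ = Φₙ(t)`. A prime `r ∣ Φ` with `r ∤ n` sees `t` with order exactly `n`, so it is a
primitive prime divisor. Otherwise pick a prime `p ∣ Φ` and write `n = p ^ k * e` with `p ∤ e`:
modulo `p`, `t` has order `e`, so `e ∣ p - 1` and `p` is the largest prime factor of `n`; hence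
`Φ` is a power of that single prime `p`. For odd `p`, `Φ` divides `1 + A + ⋯ + A ^ (p - 1)` with
`A ≡ 1 [ZMOD p]`, which is `≡ p [ZMOD p ^ 2]`, so `Φ = p`. With `T = t ^ p ^ (k - 1)` the identity
`p * Φₑ(T) = Φₑ(T ^ p)` and the bounds `(y - 1) ^ φ(e) ≤ Φₑ(y) ≤ (y + 1) ^ φ(e)` then force
`p = 3` and `T = 2`, i.e. `(n, t) = (6, 2)`. For `p = 2` we get `n = 2 ^ k` and
`Φ = t ^ (n / 2) + 1`, a power of two only if `n = 2` (an odd square plus one is `≡ 2 [MOD 4]`).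
-/

open Polynomial Finset

namespace Zsigmondy

def IsPrimitivePrimeDivisor (r t n : ℕ) : Prop :=
  r.Prime ∧ r ∣ t ^ n - 1 ∧ ∀ i : ℕ, 1 ≤ i → i < n → ¬ r ∣ t ^ i - 1

def IsException (t n : ℕ) : Prop :=
  (n = 6 ∧ t = 2) ∨ (n = 2 ∧ ∃ l : ℕ, 2 ≤ l ∧ t = 2 ^ l - 1)

theorem dvd_sub_one_iff_natCast_eq_one {r a : ℕ} (ha : 1 ≤ a) :
    r ∣ a - 1 ↔ (a : ZMod r) = 1 := by
  rw [← Nat.modEq_iff_dvd' ha, ← ZMod.natCast_eq_natCast_iff, Nat.cast_one, eq_comm]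

theorem isPrimitivePrimeDivisor_of_orderOf_eq {r t n : ℕ} (hr : r.Prime) (hn : n ≠ 0)
    (h : orderOf (t : ZMod r) = n) : IsPrimitivePrimeDivisor r t n := by
  have : Fact r.Prime := ⟨hr⟩
  have ht : 1 ≤ t := Nat.one_le_iff_ne_zero.2 fun ht => by simp [ht] at h; exact hn h.symm
  have hdvd (i : ℕ) : r ∣ t ^ i - 1 ↔ (t : ZMod r) ^ i = 1 := by
    rw [dvd_sub_one_iff_natCast_eq_one (Nat.one_le_pow _ _ ht), Nat.cast_pow]
  refine ⟨hr, (hdvd n).2 (h ▸ pow_orderOf_eq_one _), fun i hi hin hri => ?_⟩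
  have := Nat.le_of_dvd hi (h ▸ orderOf_dvd_of_pow_eq_one ((hdvd i).1 hri))
  omega

theorem not_isPrimitivePrimeDivisor_two_six (r : ℕ) : ¬ IsPrimitivePrimeDivisor r 2 6 := by
  rintro ⟨hr, h63, hmin⟩
  have h3 : ¬ r ∣ 3 := hmin 2 (by norm_num) (by norm_num)
  have h7 : ¬ r ∣ 7 := hmin 3 (by norm_num) (by norm_num)
  rcases hr.dvd_mul.1 (show r ∣ 3 * 21 from h63) with h | h
  · exact h3 h
  · rcases hr.dvd_mul.1 (show r ∣ 3 * 7 from h) with h | h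
    · exact h3 h
    · exact h7 h

theorem not_isPrimitivePrimeDivisor_two_pow_sub_one (r l : ℕ) :
    ¬ IsPrimitivePrimeDivisor r (2 ^ l - 1) 2 := by
  rintro ⟨hr, hsq, hmin⟩
  set t := 2 ^ l - 1
  have hl : t + 1 = 2 ^ l := Nat.sub_add_cancel Nat.one_le_two_pow
  have hfactor : t ^ 2 - 1 = (t + 1) * (t ^ 1 - 1) := by simpa using Nat.sq_sub_sq t 1
  rw [hfactor, hl] at hsq
  refine hmin 1 le_rfl one_lt_two ?_
  rcases hr.dvd_mul.1 hsq with h2l | h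
  · obtain rfl := (Nat.prime_dvd_prime_iff_eq hr Nat.prime_two).1 (hr.dvd_of_dvd_pow h2l)
    rw [pow_one]
    rcases l with _ | l <;> simp only [pow_zero, pow_succ] at hl <;> omega
  · exact h

theorem isPrimitiveRoot_of_dvd_cyclotomic_eval {p k e : ℕ} (hp : p.Prime) (hpe : ¬ p ∣ e)
    {x : ℤ} (h : (p : ℤ) ∣ (cyclotomic (p ^ k * e) ℤ).eval x) :
    IsPrimitiveRoot (x : ZMod p) e := by
  have : Fact p.Prime := ⟨hp⟩
  have : NeZero (e : ZMod p) := ⟨by rwa [Ne, ZMod.natCast_eq_zero_iff]⟩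
  rw [← isRoot_cyclotomic_prime_pow_mul_iff_of_charP (k := k), IsRoot,
    ← eq_intCast (Int.castRingHom (ZMod p)), cyclotomic.eval_apply, eq_intCast,
    ZMod.intCast_zmod_eq_zero_iff_dvd]
  exact h

theorem dvd_sub_one_of_dvd_cyclotomic_eval {p k e : ℕ} (hp : p.Prime) (hpe : ¬ p ∣ e)
    {x : ℤ} (h : (p : ℤ) ∣ (cyclotomic (p ^ k * e) ℤ).eval x) : e ∣ p - 1 := by
  have : Fact p.Prime := ⟨hp⟩
  have hx := isPrimitiveRoot_of_dvd_cyclotomic_eval hp hpe h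
  rw [hx.eq_orderOf]
  exact ZMod.orderOf_dvd_card_sub_one (hx.ne_zero (by rintro rfl; exact hpe (dvd_zero p)))

theorem isPrimitivePrimeDivisor_of_dvd_cyclotomic_eval {r t n : ℕ} (hr : r.Prime) (hn : n ≠ 0)
    (hrn : ¬ r ∣ n) (h : (r : ℤ) ∣ (cyclotomic n ℤ).eval (t : ℤ)) :
    IsPrimitivePrimeDivisor r t n := by
  refine isPrimitivePrimeDivisor_of_orderOf_eq hr hn ?_
  have := isPrimitiveRoot_of_dvd_cyclotomic_eval (k := 0) hr hrn (by rwa [pow_zero, one_mul])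
  rw [Int.cast_natCast] at this
  exact this.eq_orderOf.symm

theorem lt_of_dvd_cyclotomic_eval {p q n : ℕ} (hn : n ≠ 0) (hp : p.Prime) {x : ℤ}
    (hpx : (p : ℤ) ∣ (cyclotomic n ℤ).eval x) (hq : q.Prime) (hqn : q ∣ n) (hqp : q ≠ p) :
    q < p := by
  obtain ⟨k, e, hpe, rfl⟩ := Nat.exists_eq_pow_mul_and_not_dvd hn p hp.ne_one
  have hqe : q ∣ e := (hq.dvd_mul.1 hqn).resolve_left fun h =>
    hqp ((Nat.prime_dvd_prime_iff_eq hq hp).1 (hq.dvd_of_dvd_pow h))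
  have := Nat.le_of_dvd (by have := hp.two_le; omega)
    (hqe.trans (dvd_sub_one_of_dvd_cyclotomic_eval hp hpe hpx))
  omega

theorem cyclotomic_prime_pow_succ_mul_eval {R : Type*} [CommRing R] {p : ℕ} (hp : p.Prime)
    (e β : ℕ) (x : R) :
    (cyclotomic (p ^ (β + 1) * e) R).eval x = (cyclotomic (p * e) R).eval (x ^ p ^ β) := by
  induction β generalizing x with
  | zero => rw [zero_add, pow_one, pow_zero, pow_one]
  | succ β ih =>
    have hdvd : p ∣ p ^ (β + 1) * e := (dvd_pow_self p β.succ_ne_zero).mul_right e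
    rw [pow_succ p (β + 1), mul_right_comm, ← cyclotomic_expand_eq_cyclotomic hp hdvd,
      expand_eval, ih, ← pow_mul, ← pow_succ']

theorem cyclotomic_dvd_geom_sum_pow (R : Type*) [CommRing R] [IsDomain R] {d k : ℕ}
    (hd : 0 < d) (hk : 1 < k) :
    cyclotomic (d * k) R ∣ ∑ j ∈ range k, (X ^ d) ^ j := by
  have hmem : d ∈ (d * k).properDivisors :=
    Nat.mem_properDivisors.2 ⟨dvd_mul_right d k, lt_mul_right hd hk⟩
  have h := X_pow_sub_one_mul_cyclotomic_dvd_X_pow_sub_one_of_dvd R hmem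
  rw [pow_mul, ← mul_geom_sum (X ^ d) k] at h
  exact (mul_dvd_mul_iff_left (X_pow_sub_C_ne_zero hd 1)).1 h

/-- `Φ_{pe}(x)` divides `1 + A + ⋯ + A ^ (p - 1)` with `A = x ^ e ≡ 1 [ZMOD p]`, and that sum is
`≡ p [ZMOD p ^ 2]`. -/
theorem not_sq_dvd_cyclotomic_prime_mul_eval {p e : ℕ} (hp : p.Prime) (hodd : Odd p)
    (hpe : ¬ p ∣ e) (x : ℤ) : ¬ (p : ℤ) ^ 2 ∣ (cyclotomic (p * e) ℤ).eval x := by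
  intro hsq
  have he : e ≠ 0 := by rintro rfl; exact hpe (dvd_zero p)
  have hroot := isPrimitiveRoot_of_dvd_cyclotomic_eval (k := 1) hp hpe
    (by rw [pow_one]; exact (dvd_pow_self _ two_ne_zero).trans hsq)
  obtain ⟨b, hb⟩ : (p : ℤ) ∣ x ^ e - 1 := by
    rw [← ZMod.intCast_zmod_eq_zero_iff_dvd, Int.cast_sub, Int.cast_pow, hroot.pow_eq_one,
      Int.cast_one, sub_self]
  have hgeom : (cyclotomic (p * e) ℤ).eval x ∣ ∑ j ∈ range p, (x ^ e) ^ j := by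
    have h := (evalRingHom x).map_dvd
      (cyclotomic_dvd_geom_sum_pow ℤ (Nat.pos_of_ne_zero he) hp.one_lt)
    simpa [mul_comm e p, eval_finsetSum] using h
  have hsum := odd_sq_dvd_geom_sum₂_sub 1 b hodd
  simp only [one_pow, mul_one, ← sub_eq_iff_eq_add'.1 hb] at hsum
  have hpp : (p : ℤ) ^ 2 ∣ p := by simpa using dvd_sub (hsq.trans hgeom) hsum
  have hp2 : (2 : ℤ) ≤ p := by exact_mod_cast hp.two_le
  nlinarith [Int.le_of_dvd (by positivity) hpp]

theorem eq_three_and_eq_two_of_pow_sub_one_le {p : ℕ} (hp : 3 ≤ p) {x : ℤ} (hx : 2 ≤ x)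
    (h : x ^ p - 1 ≤ p * (x + 1)) : p = 3 ∧ x = 2 := by
  have hx2 : 0 ≤ x - 2 := sub_nonneg.2 hx
  obtain rfl | hp4 := hp.eq_or_lt
  · refine ⟨rfl, ?_⟩
    push_cast at h
    nlinarith [mul_nonneg hx2 (sq_nonneg x)]
  · suffices ∀ q : ℕ, 4 ≤ q → q * (x + 1) < x ^ q - 1 from absurd h (not_le.2 (this p hp4))
    intro q hq
    induction q, hq using Nat.le_induction with
    | base =>
      push_cast
      nlinarith [mul_nonneg hx2 (sq_nonneg x),
        mul_nonneg (mul_nonneg hx2 (sq_nonneg x)) (by linarith : (0 : ℤ) ≤ x)]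
    | succ q hq ih =>
      have hq1 : (1 : ℤ) ≤ q := by exact_mod_cast (by omega : 1 ≤ q)
      push_cast
      rw [pow_succ]
      nlinarith [mul_nonneg hx2 (pow_nonneg (by linarith : (0 : ℤ) ≤ x) q),
        mul_nonneg (sub_nonneg.2 hq1) (by linarith : (0 : ℤ) ≤ x + 1)]

theorem eq_three_and_eq_two_of_cyclotomic_prime_mul_eval_eq {p e : ℕ} (hp : p.Prime)
    (hp3 : 3 ≤ p) (hpe : ¬ p ∣ e) {x : ℤ} (hx : 2 ≤ x)
    (h : (cyclotomic (p * e) ℤ).eval x = p) : p = 3 ∧ x = 2 := by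
  have hrel : (cyclotomic e ℤ).eval (x ^ p) = p * (cyclotomic e ℤ).eval x := by
    rw [← expand_eval, cyclotomic_expand_eq_cyclotomic_mul hp hpe, eval_mul, mul_comm e p, h]
  have hcast (y : ℤ) : (((cyclotomic e ℤ).eval y : ℤ) : ℝ) = (cyclotomic e ℝ).eval (y : ℝ) := by
    simpa using (cyclotomic.eval_apply y e (Int.castRingHom ℝ)).symm
  have hrelℝ := congrArg (fun z : ℤ => (z : ℝ)) hrel
  simp only [Int.cast_mul, Int.cast_natCast, hcast, Int.cast_pow] at hrelℝ
  have hx1 : (1 : ℝ) < x := by exact_mod_cast hx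
  have he : e ≠ 0 := by rintro rfl; exact hpe (dvd_zero p)
  have hφ : e.totient ≠ 0 := (Nat.totient_pos.2 (Nat.pos_of_ne_zero he)).ne'
  have key : ((x : ℝ) ^ p - 1) ^ e.totient ≤ ((p : ℝ) * (x + 1)) ^ e.totient :=
    calc ((x : ℝ) ^ p - 1) ^ e.totient
        ≤ (cyclotomic e ℝ).eval ((x : ℝ) ^ p) :=
          sub_one_pow_totient_le_cyclotomic_eval (one_lt_pow₀ hx1 hp.ne_zero) e
      _ = p * (cyclotomic e ℝ).eval (x : ℝ) := hrelℝ
      _ ≤ p * ((x : ℝ) + 1) ^ e.totient := by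
          gcongr; exact cyclotomic_eval_le_add_one_pow_totient hx1 e
      _ ≤ ((p : ℝ) * (x + 1)) ^ e.totient := by
          rw [mul_pow]; gcongr
          exact le_self_pow₀ (by exact_mod_cast hp.one_lt.le) hφ
  have hle := (pow_le_pow_iff_left₀ (by nlinarith [one_lt_pow₀ hx1 hp.ne_zero]) (by positivity)
    hφ).1 key
  exact eq_three_and_eq_two_of_pow_sub_one_le hp3 hx (by exact_mod_cast hle)

theorem le_one_of_sq_add_one_eq_two_pow {s j : ℕ} (h : s ^ 2 + 1 = 2 ^ j) : s ≤ 1 := by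
  rcases Nat.lt_or_ge j 2 with hj | hj
  · have : 2 ^ j ≤ 2 ^ 1 := Nat.pow_le_pow_right two_pos (by omega)
    nlinarith
  · have h4 : 4 ∣ s ^ 2 + 1 := h ▸ pow_dvd_pow 2 hj
    have : s ^ 2 % 4 = 0 ∨ s ^ 2 % 4 = 1 := by
      obtain h | h | h | h : s % 4 = 0 ∨ s % 4 = 1 ∨ s % 4 = 2 ∨ s % 4 = 3 := by omega
      all_goals simp [Nat.pow_mod, h]
    omega

theorem isException_of_cyclotomic_two_pow_eval {t β j : ℕ} (ht : 2 ≤ t)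
    (h : ((cyclotomic (2 ^ (β + 1)) ℤ).eval (t : ℤ)).natAbs = 2 ^ j) :
    IsException t (2 ^ (β + 1)) := by
  have hΦ : (cyclotomic (2 ^ (β + 1)) ℤ).eval (t : ℤ) = ((t ^ 2 ^ β + 1 : ℕ) : ℤ) := by
    simp [cyclotomic_prime_pow_eq_geom_sum Nat.prime_two, sum_range_succ, add_comm]
  rw [hΦ, Int.natAbs_natCast] at h
  rcases β with _ | β
  · rw [pow_zero, pow_one] at h
    refine Or.inr ⟨rfl, j, ?_, by omega⟩
    by_contra hj
    have : 2 ^ j ≤ 2 ^ 1 := Nat.pow_le_pow_right two_pos (by omega)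
    omega
  · rw [pow_succ, pow_mul] at h
    have := le_one_of_sq_add_one_eq_two_pow h
    have := Nat.one_lt_pow (pow_ne_zero β two_ne_zero) ht
    omega

theorem isException_of_cyclotomic_odd_prime_pow_mul_eval {p e β t j : ℕ} (hp : p.Prime)
    (hodd : Odd p) (hpe : ¬ p ∣ e) (he : e ∣ p - 1) (ht : 2 ≤ t)
    (h : ((cyclotomic (p ^ (β + 1) * e) ℤ).eval (t : ℤ)).natAbs = p ^ j) (hj : j ≠ 0) :
    IsException t (p ^ (β + 1) * e) := by
  rw [cyclotomic_prime_pow_succ_mul_eval hp] at h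
  set T : ℤ := (t : ℤ) ^ p ^ β with hT
  have hT2 : 2 ≤ T := (le_self_pow₀ (by exact_mod_cast ht.trans' one_le_two)
    (pow_ne_zero β hp.ne_zero)).trans' (by exact_mod_cast ht)
  have hj1 : j = 1 := by
    refine le_antisymm (not_lt.1 fun hj2 => ?_) (Nat.one_le_iff_ne_zero.2 hj)
    have hsq : p ^ 2 ∣ p ^ j := pow_dvd_pow p hj2
    rw [← h] at hsq
    exact not_sq_dvd_cyclotomic_prime_mul_eval hp hodd hpe T
      (by exact_mod_cast Int.natCast_dvd.2 hsq)
  have hΦ : (cyclotomic (p * e) ℤ).eval T = p := by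
    rw [← Int.natAbs_of_nonneg (cyclotomic_pos' _ (by linarith)).le, h, hj1, pow_one]
  obtain ⟨rfl, hT_eq⟩ := eq_three_and_eq_two_of_cyclotomic_prime_mul_eval_eq hp
    (by obtain ⟨k, rfl⟩ := hodd; have := hp.two_le; omega) hpe hT2 hΦ
  have htβ : t ^ 3 ^ β = 2 := by exact_mod_cast hT.symm.trans hT_eq
  obtain rfl : t = 2 := le_antisymm (htβ ▸ Nat.le_self_pow (pow_ne_zero β three_ne_zero) t) ht
  obtain rfl : β = 0 := by
    simpa using (Nat.pow_eq_self_iff one_lt_two).1 htβ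
  rcases (Nat.dvd_prime Nat.prime_two).1 he with rfl | rfl
  · simp [cyclotomic_three, hT_eq] at hΦ
  · exact Or.inl ⟨rfl, rfl⟩

theorem isException_of_forall_prime_dvd_cyclotomic_eval_dvd {t n : ℕ} (ht : 2 ≤ t) (hn : 2 ≤ n)
    (H : ∀ r : ℕ, r.Prime → (r : ℤ) ∣ (cyclotomic n ℤ).eval (t : ℤ) → r ∣ n) :
    IsException t n := by
  have hΦ : 1 < ((cyclotomic n ℤ).eval (t : ℤ)).natAbs :=
    (sub_one_lt_natAbs_cyclotomic_eval hn (by omega)).trans_le' (by omega)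
  obtain ⟨p, hp, hpΦ⟩ := Nat.exists_prime_and_dvd hΦ.ne'
  have hpn := H p hp (Int.natCast_dvd.2 hpΦ)
  obtain ⟨j, hpow⟩ : ∃ j, ((cyclotomic n ℤ).eval (t : ℤ)).natAbs = p ^ j :=
    ⟨_, Nat.eq_prime_pow_of_unique_prime_dvd (by omega) fun {q} hq hqΦ => by
      have hqn := H q hq (Int.natCast_dvd.2 hqΦ)
      by_contra hqp
      exact lt_asymm (lt_of_dvd_cyclotomic_eval (by omega) hp (Int.natCast_dvd.2 hpΦ) hq hqn hqp)
        (lt_of_dvd_cyclotomic_eval (by omega) hq (Int.natCast_dvd.2 hqΦ) hp hpn (Ne.symm hqp))⟩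
  have hj : j ≠ 0 := by rintro rfl; rw [pow_zero] at hpow; omega
  obtain ⟨k, e, hpe, rfl⟩ := Nat.exists_eq_pow_mul_and_not_dvd (n := n) (by omega) p hp.ne_one
  have he := dvd_sub_one_of_dvd_cyclotomic_eval hp hpe (Int.natCast_dvd.2 hpΦ)
  obtain ⟨β, rfl⟩ : ∃ β, k = β + 1 :=
    Nat.exists_eq_succ_of_ne_zero (by rintro rfl; exact hpe (by simpa using hpn))
  rcases hp.eq_two_or_odd' with rfl | hodd
  · obtain rfl : e = 1 := Nat.dvd_one.1 he
    rw [mul_one] at hpow ⊢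
    exact isException_of_cyclotomic_two_pow_eval ht hpow
  · exact isException_of_cyclotomic_odd_prime_pow_mul_eval hp hodd hpe he ht hpow hj

end Zsigmondy

open Zsigmondy

/-- Zsigmondy's theorem: for `t, n > 1` there is a primitive prime divisor of `t^n - 1`
except exactly when `(n,t) = (6,2)` or `n = 2` and `t = 2^l - 1` for some `l ≥ 2`. -/
theorem exists_primitive_prime_divisor_iff (t n : ℕ) (ht : 1 < t) (hn : 1 < n) :
    (∃ r : ℕ, r.Prime ∧ r ∣ t ^ n - 1 ∧ ∀ i : ℕ, 1 ≤ i → i < n → ¬ r ∣ t ^ i - 1) ↔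
      ¬ ((n = 6 ∧ t = 2) ∨ (n = 2 ∧ ∃ l : ℕ, 2 ≤ l ∧ t = 2 ^ l - 1)) := by
  constructor
  · rintro ⟨r, hr⟩ (⟨rfl, rfl⟩ | ⟨rfl, l, -, rfl⟩)
    · exact not_isPrimitivePrimeDivisor_two_six r hr
    · exact not_isPrimitivePrimeDivisor_two_pow_sub_one r l hr
  · intro hexc
    by_contra hnone
    refine hexc (isException_of_forall_prime_dvd_cyclotomic_eval_dvd ht hn fun r hr hrΦ => ?_)
    by_contra hrn
    exact hnone ⟨r, isPrimitivePrimeDivisor_of_dvd_cyclotomic_eval hr (by omega) hrn hrΦ⟩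
end

section
/- Let q be a prime power, n > 1, and let r be a prime dividing q^n − 1 that does not divide q^i − 1 for any 1 ≤ i < n. Then SL_n(F_q) contains an element g of order r that acts irreducibly on F_q^n, i.e., the only g-invariant F_q-subspaces of F_q^n are 0 and F_q^n. -/
/-! Let `K` be the degree `n` extension of `F = 𝔽_q` and `u ∈ Kˣ` an element of order `r`; take
for `g` the matrix of multiplication by `u` in an `F`-basis of `K`. Its determinant is the norm
of `u`, an `r`-th root of unity in `F`, hence `1` because `r ∤ q - 1`. As `r ∤ q ^ i - 1` for
`i < n`, `u` lies in no proper subfield of `K`, so `F[u] = K`; a `u`-stable `F`-subspace of `K`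
is then a `K`-subspace, i.e. `0` or `K`. -/

open Module IntermediateField

namespace FiniteField

theorem eq_one_of_pow_eq_one_of_coprime {F : Type*} [Field F] [Fintype F] {x : F} {k : ℕ}
    (hk : k ≠ 0) (hx : x ^ k = 1) (hcop : k.Coprime (Fintype.card F - 1)) : x = 1 := by
  have hx0 : x ≠ 0 := by
    rintro rfl
    exact zero_ne_one ((zero_pow hk).symm.trans hx)
  rw [← orderOf_eq_one_iff]
  exact (hcop.coprime_dvd_left (orderOf_dvd_of_pow_eq_one hx)).eq_one_of_dvd
    (orderOf_dvd_of_pow_eq_one (pow_card_sub_one_eq_one x hx0))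

theorem exists_orderOf_eq_prime_of_dvd_card_sub_one {K : Type*} [GroupWithZero K] [Finite K]
    (r : ℕ) [Fact r.Prime] (h : r ∣ Nat.card K - 1) : ∃ u : K, orderOf u = r := by
  obtain ⟨ζ, hζ⟩ := exists_prime_orderOf_dvd_card' (G := Kˣ) r (by rwa [Nat.card_units])
  exact ⟨ζ, orderOf_units.trans hζ⟩

variable {F K : Type*} [Field F] [Fintype F] [Field K] [Algebra F K] [Finite K]

theorem orderOf_dvd_card_pow_finrank_sub_one {x : K} (hx : x ≠ 0) :
    orderOf x ∣ Fintype.card F ^ finrank F K - 1 := by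
  have : Module.Finite F K := .of_finite
  have := Fintype.ofFinite K
  rw [← Nat.card_eq_fintype_card, ← natCard_eq_pow_finrank, Nat.card_eq_fintype_card]
  exact orderOf_dvd_of_pow_eq_one (pow_card_sub_one_eq_one x hx)

theorem adjoin_simple_eq_top_of_not_orderOf_dvd {u : K} (hu : u ≠ 0)
    (h : ∀ i, 1 ≤ i → i < finrank F K → ¬ orderOf u ∣ Fintype.card F ^ i - 1) : F⟮u⟯ = ⊤ := by
  have : Module.Finite F K := .of_finite
  have hdvd : orderOf u ∣ Fintype.card F ^ finrank F F⟮u⟯ - 1 := by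
    have := orderOf_dvd_card_pow_finrank_sub_one (F := F) (x := AdjoinSimple.gen F u)
      fun h => hu (by simpa using congrArg Subtype.val h)
    rwa [← orderOf_injective F⟮u⟯.val.toMonoidHom Subtype.val_injective] at this
  refine eq_of_le_of_finrank_eq le_top ?_
  rw [finrank_top']
  by_contra hne
  exact h _ (finrank_pos (R := F) (M := F⟮u⟯))
    ((Submodule.finrank_le F⟮u⟯.toSubalgebra.toSubmodule).lt_of_ne hne) hdvd

end FiniteField

theorem Submodule.eq_bot_or_eq_top_of_mul_mem {F K : Type*} [CommSemiring F] [Field K]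
    [Algebra F K] {u : K} (hu : Algebra.adjoin F {u} = ⊤) {W : Submodule F K}
    (hW : ∀ x ∈ W, u * x ∈ W) : W = ⊥ ∨ W = ⊤ := by
  have hmul : ∀ y z, z ∈ W → y * z ∈ W := by
    intro y
    induction (hu ▸ Algebra.mem_top : y ∈ Algebra.adjoin F {u}) using Algebra.adjoin_induction with
    | mem x hx => rw [Set.mem_singleton_iff.1 hx]; exact hW
    | algebraMap a => intro z hz; rw [← Algebra.smul_def]; exact W.smul_mem a hz
    | add y₁ y₂ _ _ h₁ h₂ => intro z hz; rw [add_mul]; exact W.add_mem (h₁ z hz) (h₂ z hz)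
    | mul y₁ y₂ _ _ h₁ h₂ => intro z hz; rw [mul_assoc]; exact h₁ _ (h₂ z hz)
  refine or_iff_not_imp_left.2 fun hW0 => ?_
  obtain ⟨x, hxW, hx0⟩ := W.ne_bot_iff.1 hW0
  exact eq_top_iff.2 fun y _ => by simpa [hx0] using hmul (y * x⁻¹) x hxW

section LeftMulMatrix

variable {F K ι : Type*} [CommRing F] [Field K] [Algebra F K] [Fintype ι] [DecidableEq ι]

theorem Algebra.orderOf_leftMulMatrix (b : Basis ι F K) (x : K) :
    orderOf (leftMulMatrix b x) = orderOf x :=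
  orderOf_injective (leftMulMatrix b).toMonoidHom (leftMulMatrix_injective b) x

theorem Submodule.eq_bot_or_eq_top_of_leftMulMatrix_mulVec_mem (b : Basis ι F K) {u : K}
    (hu : Algebra.adjoin F {u} = ⊤) {U : Submodule F (ι → F)}
    (hU : ∀ v ∈ U, (Algebra.leftMulMatrix b u).mulVec v ∈ U) : U = ⊥ ∨ U = ⊤ := by
  have hW : ∀ x ∈ U.comap b.equivFun.toLinearMap, u * x ∈ U.comap b.equivFun.toLinearMap := by
    intro x hx
    simpa [← Algebra.leftMulMatrix_mulVec_repr] using hU _ hx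
  rw [← map_comap_eq_of_surjective b.equivFun.surjective U]
  rcases eq_bot_or_eq_top_of_mul_mem hu hW with h | h
  · left; rw [h, map_bot]
  · right; rw [h, map_top, LinearEquiv.range]

end LeftMulMatrix

theorem SL_contains_irreducible_element_of_order_general (q n : ℕ) (hn : 1 < n)
    (F : Type*) [Field F] [Fintype F] (hF : Fintype.card F = q)
    (r : ℕ) (hr : r.Prime) (hdvd : r ∣ q ^ n - 1)
    (hprim : ∀ i : ℕ, 1 ≤ i → i < n → ¬ r ∣ q ^ i - 1) :
    ∃ g : Matrix.SpecialLinearGroup (Fin n) F, orderOf g = r ∧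
      ∀ U : Submodule F (Fin n → F),
        (∀ v ∈ U, (g : Matrix (Fin n) (Fin n) F).mulVec v ∈ U) → U = ⊥ ∨ U = ⊤ := by
  subst hF
  have : Fact r.Prime := ⟨hr⟩
  have : Fact (ringChar F).Prime := ⟨CharP.char_is_prime F _⟩
  have : NeZero n := ⟨by omega⟩
  let K := FiniteField.Extension F (ringChar F) n
  have hK : finrank F K = n := FiniteField.finrank_extension F _ n
  obtain ⟨u, hu⟩ : ∃ u : K, orderOf u = r :=
    FiniteField.exists_orderOf_eq_prime_of_dvd_card_sub_one r
      (by rwa [FiniteField.natCard_extension, Nat.card_eq_fintype_card])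
  have hu0 : u ≠ 0 :=
    ne_zero_pow hr.ne_zero (by rw [← hu, pow_orderOf_eq_one]; exact one_ne_zero)
  have hnorm : Algebra.norm F u = 1 :=
    FiniteField.eq_one_of_pow_eq_one_of_coprime hr.ne_zero
      (by rw [← map_pow, ← hu, pow_orderOf_eq_one, map_one])
      ((Nat.Prime.coprime_iff_not_dvd hr).2 (by simpa using hprim 1 le_rfl hn))
  let b := finBasisOfFinrankEq F K hK
  let g : Matrix.SpecialLinearGroup (Fin n) F :=
    ⟨Algebra.leftMulMatrix b u, by rw [← Algebra.norm_eq_matrix_det, hnorm]⟩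
  refine ⟨g, ?_, ?_⟩
  · rw [← orderOf_injective _ Matrix.SpecialLinearGroup.coeMonoidHom_injective g,
      Matrix.SpecialLinearGroup.coeMonoidHom_apply, Algebra.orderOf_leftMulMatrix, hu]
  · have hK_eq : F⟮u⟯ = ⊤ := FiniteField.adjoin_simple_eq_top_of_not_orderOf_dvd hu0
      (by rw [hu, hK]; exact hprim)
    intro U hU
    refine Submodule.eq_bot_or_eq_top_of_leftMulMatrix_mulVec_mem b ?_ hU
    rw [← adjoin_simple_toSubalgebra_of_isAlgebraic (.of_finite F u), hK_eq,
      top_toSubalgebra]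

/-- If `r` is a primitive prime divisor of `q^n - 1`, then `SL_n(F_q)` contains an
irreducible element of order `r`. -/
theorem SL_contains_irreducible_element_of_order (p m q n : ℕ) (hp : p.Prime) (hm : 0 < m)
    (hq : q = p ^ m) (hn : 1 < n)
    (F : Type*) [Field F] [Fintype F] (hF : Fintype.card F = q)
    (r : ℕ) (hr : r.Prime) (hdvd : r ∣ q ^ n - 1)
    (hprim : ∀ i : ℕ, 1 ≤ i → i < n → ¬ r ∣ q ^ i - 1) :
    ∃ g : Matrix.SpecialLinearGroup (Fin n) F, orderOf g = r ∧
      ∀ U : Submodule F (Fin n → F),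
        (∀ v ∈ U, (g : Matrix (Fin n) (Fin n) F).mulVec v ∈ U) → U = ⊥ ∨ U = ⊤ :=
  SL_contains_irreducible_element_of_order_general q n hn F hF r hr hdvd hprim
end

section
/- Let p be a prime, q = p^m a prime power, n ≥ 2, and let Z be any subgroup of the center of SL_n(F_q). Then for every natural number t ≥ 0, the quotient group SL_n(F_q)/Z contains an element of order p^{t+1} if and only if n ≥ p^t + 1. -/
open Matrix Polynomial

/-- The truncated shift nilpotent matrix: ones at positions `(i, i+1)` for `i+1 ≤ c`. -/
private def shiftMat (n c : ℕ) (F : Type*) [Field F] : Matrix (Fin n) (Fin n) F :=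
  Matrix.of fun i j => if (i : ℕ) + 1 = (j : ℕ) ∧ (j : ℕ) ≤ c then 1 else 0

private lemma shiftMat_pow {n c : ℕ} (F : Type*) [Field F] (k : ℕ) (hk : 1 ≤ k) :
    ∀ i j : Fin n,
      (shiftMat n c F ^ k) i j = if (i : ℕ) + k = (j : ℕ) ∧ (j : ℕ) ≤ c then 1 else 0 := by
  induction k, hk using Nat.le_induction with
  | base => intro i j; rw [pow_one]; rfl
  | succ k hk ih =>
    intro i j
    rw [pow_succ, Matrix.mul_apply]
    by_cases hj : 1 ≤ (j : ℕ) ∧ (j : ℕ) ≤ c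
    · have hjn : (j : ℕ) - 1 < n := lt_of_le_of_lt (Nat.sub_le _ _) j.isLt
      have hN : ∀ l : Fin n, shiftMat n c F l j =
          if l = (⟨(j : ℕ) - 1, hjn⟩ : Fin n) then (1 : F) else 0 := by
        intro l
        have hiff : ((l : ℕ) + 1 = (j : ℕ) ∧ (j : ℕ) ≤ c) ↔
            l = (⟨(j : ℕ) - 1, hjn⟩ : Fin n) := by
          rw [Fin.ext_iff]
          simp only [Fin.val_mk]
          omega
        simp only [shiftMat, Matrix.of_apply]
        rw [if_congr hiff rfl rfl]
      simp only [hN, mul_ite, mul_one, mul_zero, Finset.sum_ite_eq', Finset.mem_univ, if_true]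
      rw [ih]
      simp only [Fin.val_mk]
      rw [if_congr (show ((i : ℕ) + k = (j : ℕ) - 1 ∧ (j : ℕ) - 1 ≤ c) ↔
        ((i : ℕ) + (k + 1) = (j : ℕ) ∧ (j : ℕ) ≤ c) by omega) rfl rfl]
    · have h0 : ∀ l : Fin n, shiftMat n c F l j = 0 := by
        intro l
        simp only [shiftMat, Matrix.of_apply, ite_eq_right_iff]
        intro hcond
        exact absurd ⟨by omega, hcond.2⟩ hj
      simp only [h0, mul_zero, Finset.sum_const_zero]
      rw [if_neg (by omega)]

/-- A nilpotent `n × n` matrix over a field satisfies `M ^ n = 0`. -/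
private lemma pow_eq_zero_of_isNilpotent {n : ℕ} {F : Type*} [Field F]
    (M : Matrix (Fin n) (Fin n) F) (h : IsNilpotent M) : M ^ n = 0 := by
  have h1 := Matrix.isNilpotent_charpoly_sub_pow_of_isNilpotent h
  have h2 : M.charpoly = X ^ (Fintype.card (Fin n)) := by
    have := h1.eq_zero
    rwa [sub_eq_zero] at this
  have h3 := M.aeval_self_charpoly
  rw [h2, map_pow, aeval_X] at h3
  simpa [Fintype.card_fin] using h3

/-- If an element of `SL_n(F)` satisfies `h ^ p ^ a = 1` in characteristic `p` and `n ≤ p ^ t`,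
then already `h ^ p ^ t = 1`. -/
private lemma pow_eq_one_of_le {p t a n : ℕ} (hp : p.Prime) {F : Type*} [Field F] [CharP F p]
    (h : Matrix.SpecialLinearGroup (Fin n) F) (hord : h ^ p ^ a = 1) (hle : n ≤ p ^ t) :
    h ^ p ^ t = 1 := by
  haveI : Fact p.Prime := ⟨hp⟩
  rcases Nat.eq_zero_or_pos n with hn0 | hn0
  · subst hn0
    exact Subsingleton.elim _ _
  haveI : Nonempty (Fin n) := ⟨⟨0, hn0⟩⟩
  set x : Matrix (Fin n) (Fin n) F := (h : Matrix (Fin n) (Fin n) F) with hxdef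
  have hx : x ^ p ^ a = 1 := by
    rw [hxdef, ← Matrix.SpecialLinearGroup.coe_pow, hord, Matrix.SpecialLinearGroup.coe_one]
  have hnil : (x - 1) ^ p ^ a = 0 := by
    rw [sub_pow_char_pow_of_commute _ _ (Commute.one_right x), hx, one_pow, sub_self]
  have hN : (x - 1) ^ n = 0 := pow_eq_zero_of_isNilpotent _ ⟨_, hnil⟩
  have ht : (x - 1) ^ p ^ t = 0 := pow_eq_zero_of_le hle hN
  have hxt : x ^ p ^ t = 1 := by
    rw [sub_pow_char_pow_of_commute _ _ (Commute.one_right x), one_pow, sub_eq_zero] at ht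
    exact ht
  have hco : ((h ^ p ^ t : Matrix.SpecialLinearGroup (Fin n) F) : Matrix (Fin n) (Fin n) F) =
      ((1 : Matrix.SpecialLinearGroup (Fin n) F) : Matrix (Fin n) (Fin n) F) := by
    rw [Matrix.SpecialLinearGroup.coe_pow, Matrix.SpecialLinearGroup.coe_one, ← hxdef, hxt]
  exact Subtype.coe_injective hco

/-- A quotient of `SL_n(F_q)`, `q = p^m`, by a central subgroup contains an element of
order `p^{t+1}` if and only if `n ≥ p^t + 1`. -/
theorem quotient_SL_has_element_of_p_power_order_iff (p m n : ℕ) (hp : p.Prime)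
    (hm : 0 < m) (hn : 2 ≤ n)
    (F : Type*) [Field F] [Fintype F] (hF : Fintype.card F = p ^ m)
    (Z : Subgroup (Matrix.SpecialLinearGroup (Fin n) F))
    (hZ : Z ≤ Subgroup.center (Matrix.SpecialLinearGroup (Fin n) F)) (t : ℕ) :
    haveI : Z.Normal := ⟨fun z hz g => by
      rw [(Subgroup.mem_center_iff.mp (hZ hz)) g, mul_inv_cancel_right]; exact hz⟩
    ((∃ g : Matrix.SpecialLinearGroup (Fin n) F ⧸ Z, orderOf g = p ^ (t + 1)) ↔
      p ^ t + 1 ≤ n) := by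
  haveI hZn : Z.Normal := ⟨fun z hz g => by
    rw [(Subgroup.mem_center_iff.mp (hZ hz)) g, mul_inv_cancel_right]; exact hz⟩
  haveI : Fact p.Prime := ⟨hp⟩
  -- characteristic of F is p
  haveI hchar : CharP F p := by
    haveI := ringChar.charP F
    obtain ⟨k, hprime, hcard⟩ := FiniteField.card F (ringChar F)
    have hdvd : p ∣ ringChar F := by
      have h1 : p ∣ (ringChar F) ^ (k : ℕ) := by
        rw [← hcard, hF]
        exact dvd_pow_self p hm.ne'
      exact hp.dvd_of_dvd_pow h1
    have : p = ringChar F := ((Nat.prime_dvd_prime_iff_eq hp hprime).mp hdvd)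
    rwa [this]
  haveI : Nonempty (Fin n) := ⟨⟨0, by omega⟩⟩
  constructor
  · rintro ⟨g, hg⟩
    obtain ⟨g', rfl⟩ := QuotientGroup.mk'_surjective Z g
    by_contra hcon
    push_neg at hcon
    have hle : n ≤ p ^ t := by omega
    set k := orderOf g' with hkdef
    have hk0 : k ≠ 0 := (orderOf_pos g').ne'
    set a := k.factorization p with hadef
    set c := ordCompl[p] k with hcdef
    have hc0 : 0 < c := Nat.ordCompl_pos p hk0
    have hcdvd : c ∣ k := Nat.ordCompl_dvd k p
    have hccop : p.Coprime c := hp.coprime_iff_not_dvd.mpr (Nat.not_dvd_ordCompl hp hk0)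
    -- g'^c has order p^a
    have h1 : orderOf (g' ^ c) = p ^ a := by
      rw [orderOf_pow, ← hkdef, Nat.gcd_eq_right hcdvd]
      exact Nat.div_div_self (Nat.ordProj_dvd k p) hk0
    -- the image of g'^c has order p^(t+1)
    have h3 : orderOf ((QuotientGroup.mk' Z) g' ^ c) = p ^ (t + 1) := by
      rw [orderOf_pow, hg, Nat.Coprime.gcd_eq_one (hccop.pow_left _), Nat.div_one]
    -- but (g'^c)^(p^t) = 1 since n ≤ p^t
    have h4 : (g' ^ c) ^ p ^ t = 1 := by
      apply pow_eq_one_of_le hp (a := a) _ _ hle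
      rw [← h1]
      exact pow_orderOf_eq_one _
    have h5 : ((QuotientGroup.mk' Z) g' ^ c) ^ p ^ t = 1 := by
      rw [← map_pow, ← map_pow, h4, _root_.map_one]
    have h6 : p ^ (t + 1) ∣ p ^ t := h3 ▸ orderOf_dvd_of_pow_eq_one h5
    have := (Nat.pow_dvd_pow_iff_le_right hp.one_lt).mp h6
    omega
  · intro hcub
    set N : Matrix (Fin n) (Fin n) F := shiftMat n (p ^ t) F with hNdef
    have hpt1 : 1 ≤ p ^ t := Nat.one_le_pow _ _ hp.pos
    have hptlt : p ^ t < p ^ (t + 1) := Nat.pow_lt_pow_right hp.one_lt t.lt_succ_self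
    -- determinant of 1 + N is 1
    have htri : (1 + N).BlockTriangular id := by
      intro i j hij
      have hij' : (j : ℕ) < (i : ℕ) := hij
      have h1 : (1 : Matrix (Fin n) (Fin n) F) i j = 0 :=
        Matrix.one_apply_ne (by intro h; subst h; omega)
      have h2 : N i j = 0 := by
        simp only [hNdef, shiftMat, Matrix.of_apply]
        rw [if_neg (show ¬((i : ℕ) + 1 = (j : ℕ) ∧ (j : ℕ) ≤ p ^ t) by omega)]
      simp [Matrix.add_apply, h1, h2]
    have hdet : (1 + N).det = 1 := by
      rw [Matrix.det_of_upperTriangular htri]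
      have hdiag : ∀ i : Fin n, (1 + N) i i = 1 := by
        intro i
        have h2 : N i i = 0 := by
          simp only [hNdef, shiftMat, Matrix.of_apply]
          rw [if_neg (show ¬((i : ℕ) + 1 = (i : ℕ) ∧ (i : ℕ) ≤ p ^ t) by omega)]
        simp [Matrix.add_apply, h2]
      simp [hdiag]
    set u : Matrix.SpecialLinearGroup (Fin n) F := ⟨1 + N, hdet⟩ with hudef
    -- N ^ p ^ (t+1) = 0
    have hNzero : N ^ p ^ (t + 1) = 0 := by
      ext i j
      rw [shiftMat_pow F _ (le_trans hpt1 hptlt.le)]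
      rw [if_neg (by omega), Matrix.zero_apply]
    -- u ^ p ^ (t+1) = 1
    have hu1 : u ^ p ^ (t + 1) = 1 := by
      have hco : ((u ^ p ^ (t + 1) : Matrix.SpecialLinearGroup (Fin n) F) :
          Matrix (Fin n) (Fin n) F) =
          ((1 : Matrix.SpecialLinearGroup (Fin n) F) : Matrix (Fin n) (Fin n) F) := by
        rw [Matrix.SpecialLinearGroup.coe_pow, Matrix.SpecialLinearGroup.coe_one]
        show (1 + N) ^ p ^ (t + 1) = 1
        rw [add_pow_char_pow_of_commute _ _ (Commute.one_left N), one_pow, hNzero, add_zero]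
      exact Subtype.coe_injective hco
    -- u ^ p ^ t ∉ Z
    have hptn : p ^ t < n := by omega
    have humem : (u ^ p ^ t) ∉ Z := by
      intro hmemZ
      obtain ⟨r, -, hr⟩ :=
        Matrix.SpecialLinearGroup.mem_center_iff.mp (hZ hmemZ)
      have hcoe : ((u ^ p ^ t : Matrix.SpecialLinearGroup (Fin n) F) :
          Matrix (Fin n) (Fin n) F) = 1 + N ^ p ^ t := by
        rw [Matrix.SpecialLinearGroup.coe_pow]
        show (1 + N) ^ p ^ t = 1 + N ^ p ^ t
        rw [add_pow_char_pow_of_commute _ _ (Commute.one_left N), one_pow]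
      rw [hcoe] at hr
      have := congrFun (congrFun hr (⟨0, by omega⟩ : Fin n)) (⟨p ^ t, hptn⟩ : Fin n)
      rw [Matrix.scalar_apply, Matrix.diagonal_apply_ne _ (by
          intro h
          have := Fin.mk.injEq .. ▸ h
          simp only [Fin.mk.injEq] at h
          omega)] at this
      rw [Matrix.add_apply, shiftMat_pow F _ hpt1] at this
      rw [Matrix.one_apply_ne (by
          intro h
          simp only [Fin.mk.injEq] at h
          omega)] at this
      rw [if_pos ⟨by simp, by simp⟩] at this
      simp at this
    refine ⟨(QuotientGroup.mk' Z) u, orderOf_eq_prime_pow ?_ ?_⟩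
    · intro hcon
      rw [← map_pow] at hcon
      exact humem ((QuotientGroup.eq_one_iff _).mp hcon)
    · rw [← map_pow, hu1, _root_.map_one]
end

section
/- Let p be a prime and q = p^m a prime power. Suppose n = s + b₁ + … + b_k, where k ≥ 0, either s = 0 or s = p^t for some t ≥ 0, the natural numbers b₁, …, b_k are pairwise coprime and each greater than 1, and for each i, rᵢ is a prime dividing q^{bᵢ} − 1 that does not divide q^j − 1 for any 1 ≤ j < bᵢ. Set t = 0 in case s = 0. Then SL_n(F_q) contains no element of order p^{t+1}·r₁·…·r_k. -/
/-!
Let `A` be the matrix, `μ` its minimal polynomial and `M = r₁ ⋯ r_k`, which is prime to `p`.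
Since `A` has order `p^{t+1} M`, `μ` divides `X^{p^{t+1} M} - 1 = (X^M - 1)^{p^{t+1}}`, and
`X^M - 1` is squarefree. As `μ` does not divide `(X^M - 1)^{p^t}`, some irreducible factor `f₀`
occurs in `μ` with multiplicity at least `p^t + 1`. As `μ` does not divide
`(X^{M/rᵢ} - 1)^{p^{t+1}}`, some irreducible factor `fᵢ` of `μ` does not divide `X^{M/rᵢ} - 1`;
a root of `fᵢ` then has multiplicative order divisible by `rᵢ` in `F_{q^{deg fᵢ}}`, so
`rᵢ ∣ q^{deg fᵢ} - 1` and `bᵢ ∣ deg fᵢ`. The `bᵢ` attached to one and the same factor are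
pairwise coprime, so their sum is at most its degree, and counting degrees gives
`n ≥ deg μ ≥ p^t + 1 + ∑ bᵢ > s + ∑ bᵢ = n`.
-/

open Polynomial UniqueFactorizationMonoid Finset

theorem Finset.sum_le_prod_of_two_le {ι : Type*} (s : Finset ι) {f : ι → ℕ}
    (hf : ∀ i ∈ s, 2 ≤ f i) : ∑ i ∈ s, f i ≤ ∏ i ∈ s, f i := by
  classical
  induction s using Finset.induction with
  | empty => simp
  | @insert a s ha ih =>
    rw [sum_insert ha, prod_insert ha]
    have hfa : 2 ≤ f a := hf a (mem_insert_self a s)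
    have hfs : ∀ i ∈ s, 2 ≤ f i := fun i hi => hf i (mem_insert_of_mem hi)
    rcases s.eq_empty_or_nonempty with rfl | hs
    · simp
    · have hprod : 2 ≤ ∏ i ∈ s, f i :=
        (Nat.le_self_pow hs.card_pos.ne' 2).trans (pow_card_le_prod s f 2 hfs)
      nlinarith [ih hfs]

theorem Finset.prod_dvd_of_pairwise_coprime {ι : Type*} {s : Finset ι} {f : ι → ℕ}
    (hf : (s : Set ι).Pairwise fun i j => Nat.Coprime (f i) (f j)) {d : ℕ}
    (h : ∀ i ∈ s, f i ∣ d) : ∏ i ∈ s, f i ∣ d := by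
  have := Finset.prod_dvd_of_coprime (z := (d : ℤ)) (s := fun i => (f i : ℤ))
    (fun i hi j hj hij => Nat.isCoprime_iff_coprime.2 (hf hi hj hij))
    (fun i hi => Int.natCast_dvd_natCast.2 (h i hi))
  exact_mod_cast this

theorem Finset.sum_le_sum_image_of_dvd {ι κ : Type*} [Fintype ι] [DecidableEq κ] {b : ι → ℕ}
    (hb : ∀ i, 2 ≤ b i) (hcop : Pairwise fun i j => Nat.Coprime (b i) (b j)) (g : ι → κ)
    {D : κ → ℕ} (hD : ∀ i, b i ∣ D (g i)) (hD0 : ∀ i, 0 < D (g i)) :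
    ∑ i, b i ≤ ∑ x ∈ univ.image g, D x := by
  rw [← sum_fiberwise_of_maps_to fun i _ => mem_image_of_mem g (mem_univ i)]
  refine sum_le_sum fun x hx => ?_
  obtain ⟨i, -, rfl⟩ := mem_image.1 hx
  calc ∑ j with g j = g i, b j ≤ ∏ j with g j = g i, b j := sum_le_prod_of_two_le _ fun j _ => hb j
    _ ≤ D (g i) := Nat.le_of_dvd (hD0 i) <| prod_dvd_of_pairwise_coprime
        (fun j _ k _ hjk => hcop hjk) fun j hj => (mem_filter.1 hj).2 ▸ hD j

theorem Nat.not_mul_dvd_self_of_one_lt {a c : ℕ} (ha : 1 < a) (hc : c ≠ 0) : ¬ a * c ∣ c :=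
  fun h => by nlinarith [Nat.le_of_dvd (Nat.pos_of_ne_zero hc) h, Nat.pos_of_ne_zero hc]

theorem Nat.dvd_pow_sub_one_iff_natCast_pow_eq_one {q r e : ℕ} (hq : 0 < q) :
    r ∣ q ^ e - 1 ↔ (q : ZMod r) ^ e = 1 := by
  rw [← Nat.modEq_iff_dvd' (Nat.one_le_pow _ _ hq), ← ZMod.natCast_eq_natCast_iff]
  push_cast
  exact eq_comm

def Nat.IsPrimitivePrimeDivisor (r q b : ℕ) : Prop :=
  r.Prime ∧ r ∣ q ^ b - 1 ∧ ∀ j : ℕ, 1 ≤ j → j < b → ¬ r ∣ q ^ j - 1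

namespace Nat.IsPrimitivePrimeDivisor

variable {r q b : ℕ}

theorem orderOf_eq (h : IsPrimitivePrimeDivisor r q b) (hq : 0 < q) (hb : 0 < b) :
    orderOf (q : ZMod r) = b := by
  rw [orderOf_eq_iff hb]
  simp only [ne_eq, ← Nat.dvd_pow_sub_one_iff_natCast_pow_eq_one hq]
  exact ⟨h.2.1, fun j hjb hj => h.2.2 j hj hjb⟩

theorem dvd_of_dvd_pow_sub_one (h : IsPrimitivePrimeDivisor r q b) (hq : 0 < q) (hb : 0 < b)
    {d : ℕ} (hd : r ∣ q ^ d - 1) : b ∣ d := by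
  rwa [Nat.dvd_pow_sub_one_iff_natCast_pow_eq_one hq, ← orderOf_dvd_iff_pow_eq_one,
    h.orderOf_eq hq hb] at hd

theorem not_dvd (h : IsPrimitivePrimeDivisor r q b) (hq : 0 < q) (hb : 0 < b) : ¬ r ∣ q := by
  intro hrq
  have := Fact.mk h.1
  have hpow := (Nat.dvd_pow_sub_one_iff_natCast_pow_eq_one hq).1 h.2.1
  rw [(ZMod.natCast_eq_zero_iff q r).2 hrq, zero_pow hb.ne'] at hpow
  exact zero_ne_one hpow

end Nat.IsPrimitivePrimeDivisor

theorem Nat.Prime.dvd_orderOf_of_pow_mul_eq_one {G : Type*} [Monoid G] {x : G} {r M : ℕ}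
    (hr : r.Prime) (h1 : x ^ (r * M) = 1) (h2 : x ^ M ≠ 1) : r ∣ orderOf x := by
  by_contra h
  exact h2 <| orderOf_dvd_iff_pow_eq_one.1 <|
    (hr.coprime_iff_not_dvd.2 h).symm.dvd_of_dvd_mul_left (orderOf_dvd_of_pow_eq_one h1)

theorem AdjoinRoot.root_pow_eq_one_iff {R : Type*} [CommRing R] {f : R[X]} {L : ℕ} :
    root f ^ L = 1 ↔ f ∣ X ^ L - 1 := by
  rw [← mk_eq_zero, map_sub, map_pow, mk_X, map_one, sub_eq_zero]

-- The root of `f` in `AdjoinRoot f ≅ 𝔽_{|F|^{deg f}}` has order divisible by `r`.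
theorem Nat.Prime.dvd_card_pow_natDegree_sub_one {F : Type*} [Field F] [Fintype F] {f : F[X]}
    (hf : Irreducible f) {r M : ℕ} (hr : r.Prime) (h1 : f ∣ X ^ (r * M) - 1)
    (h2 : ¬ f ∣ X ^ M - 1) : r ∣ Fintype.card F ^ f.natDegree - 1 := by
  have := Fact.mk hf
  have : Module.Finite F (AdjoinRoot f) := (AdjoinRoot.powerBasis hf.ne_zero).finite
  have : Finite (AdjoinRoot f) := Module.finite_of_finite F
  have hcard : Nat.card (AdjoinRoot f) = Fintype.card F ^ f.natDegree := by
    rw [Module.natCard_eq_pow_finrank (K := F), (AdjoinRoot.powerBasis hf.ne_zero).finrank,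
      AdjoinRoot.powerBasis_dim, Nat.card_eq_fintype_card]
  have hM : M ≠ 0 := by rintro rfl; simp at h2
  have hroot : AdjoinRoot.root f ^ (r * M) = 1 := AdjoinRoot.root_pow_eq_one_iff.2 h1
  obtain ⟨u, hu⟩ := IsUnit.of_pow_eq_one hroot (Nat.mul_ne_zero hr.ne_zero hM)
  have hr_dvd : r ∣ orderOf u := by
    rw [← orderOf_units, hu]
    exact hr.dvd_orderOf_of_pow_mul_eq_one hroot (mt AdjoinRoot.root_pow_eq_one_iff.1 h2)
  exact hr_dvd.trans <| hcard ▸ Nat.card_units (AdjoinRoot f) ▸ orderOf_dvd_natCard u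

section NormalizedFactors

variable {α : Type*} [CommMonoidWithZero α] [NormalizationMonoid α]
  [UniqueFactorizationMonoid α] [DecidableEq α] {a g : α}

theorem dvd_pow_of_forall_mem_normalizedFactors (ha : a ≠ 0) (hg : g ≠ 0) {e : ℕ}
    (hdvd : ∀ f ∈ normalizedFactors a, f ∣ g)
    (hcount : ∀ f ∈ normalizedFactors a, (normalizedFactors a).count f ≤ e) : a ∣ g ^ e := by
  rw [dvd_iff_normalizedFactors_le_normalizedFactors ha (pow_ne_zero e hg), normalizedFactors_pow,
    Multiset.le_iff_count]
  intro f
  by_cases hf : f ∈ normalizedFactors a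
  · obtain ⟨f', hf', hff'⟩ := exists_mem_normalizedFactors_of_dvd hg
      (irreducible_of_normalized_factor f hf) (hdvd f hf)
    have : f = f' := by
      rw [← normalize_normalized_factor f hf, ← normalize_normalized_factor f' hf']
      exact normalize_eq_normalize hff'.dvd hff'.symm.dvd
    rw [Multiset.count_nsmul]
    exact (hcount f hf).trans (Nat.le_mul_of_pos_right e (Multiset.count_pos.2 (this ▸ hf')))
  · simp [Multiset.count_eq_zero_of_notMem hf]

theorem count_normalizedFactors_le_of_dvd_pow [Nontrivial α] (ha : a ≠ 0) (hg : Squarefree g)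
    {e : ℕ} (h : a ∣ g ^ e) (f : α) : (normalizedFactors a).count f ≤ e := by
  have hg0 : g ≠ 0 := hg.ne_zero
  have hle := (dvd_iff_normalizedFactors_le_normalizedFactors ha (pow_ne_zero e hg0)).1 h
  rw [normalizedFactors_pow] at hle
  calc (normalizedFactors a).count f ≤ (e • normalizedFactors g).count f :=
        Multiset.count_le_of_le f hle
    _ = e * (normalizedFactors g).count f := Multiset.count_nsmul ..
    _ ≤ e * 1 := Nat.mul_le_mul_left e <| Multiset.nodup_iff_count_le_one.1
        ((squarefree_iff_nodup_normalizedFactors hg0).1 hg) f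
    _ = e := mul_one e

end NormalizedFactors

theorem Polynomial.X_pow_sub_one_ne_zero {R : Type*} [CommRing R] [Nontrivial R] {L : ℕ}
    (hL : L ≠ 0) : (X : R[X]) ^ L - 1 ≠ 0 := by
  simpa using X_pow_sub_C_ne_zero (R := R) (Nat.pos_of_ne_zero hL) 1

theorem Polynomial.squarefree_X_pow_sub_one {F : Type*} [Field F] {p M : ℕ} [CharP F p]
    (hpM : ¬ p ∣ M) : Squarefree ((X : F[X]) ^ M - 1) :=
  (X_pow_sub_one_separable_iff.2 (by rwa [ne_eq, CharP.cast_eq_zero_iff F p])).squarefree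

section CharP

variable {F : Type*} [Field F] {p : ℕ} [Fact p.Prime] [CharP F p] {μ : F[X]} {e M : ℕ}

theorem X_pow_sub_one_pow_char_pow (L e : ℕ) :
    ((X : F[X]) ^ L - 1) ^ p ^ e = X ^ (L * p ^ e) - 1 := by
  rw [sub_pow_char_pow, one_pow, ← pow_mul]

theorem dvd_X_pow_sub_one_pow_of_dvd_iff (hμ : ∀ j, μ ∣ X ^ j - 1 ↔ p ^ (e + 1) * M ∣ j) :
    μ ∣ ((X : F[X]) ^ M - 1) ^ p ^ (e + 1) := by
  rw [X_pow_sub_one_pow_char_pow, hμ, mul_comm]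

theorem dvd_X_pow_sub_one_of_mem_normalizedFactors [DecidableEq F]
    (hμ : ∀ j, μ ∣ X ^ j - 1 ↔ p ^ (e + 1) * M ∣ j) {f : F[X]} (hf : f ∈ normalizedFactors μ) :
    f ∣ X ^ M - 1 :=
  (prime_of_normalized_factor f hf).dvd_of_dvd_pow <|
    (dvd_of_mem_normalizedFactors hf).trans (dvd_X_pow_sub_one_pow_of_dvd_iff hμ)

theorem exists_lt_count_normalizedFactors [DecidableEq F]
    (hμ : ∀ j, μ ∣ X ^ j - 1 ↔ p ^ (e + 1) * M ∣ j) (hpM : ¬ p ∣ M) :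
    ∃ f ∈ normalizedFactors μ, p ^ e < (normalizedFactors μ).count f := by
  have hp : p.Prime := Fact.out
  have hM : M ≠ 0 := by rintro rfl; exact hpM (dvd_zero p)
  have hμ0 : μ ≠ 0 := ne_zero_of_dvd_ne_zero (pow_ne_zero _ (X_pow_sub_one_ne_zero hM))
    (dvd_X_pow_sub_one_pow_of_dvd_iff hμ)
  by_contra! h
  have hdvd := dvd_pow_of_forall_mem_normalizedFactors hμ0 (X_pow_sub_one_ne_zero hM)
    (fun f hf => dvd_X_pow_sub_one_of_mem_normalizedFactors hμ hf) h
  rw [X_pow_sub_one_pow_char_pow, hμ] at hdvd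
  exact Nat.not_mul_dvd_self_of_one_lt hp.one_lt (c := M * p ^ e)
    (mul_ne_zero hM (pow_ne_zero _ hp.ne_zero)) (by convert hdvd using 1; ring)

theorem exists_mem_normalizedFactors_not_dvd [DecidableEq F]
    (hμ : ∀ j, μ ∣ X ^ j - 1 ↔ p ^ (e + 1) * M ∣ j) (hpM : ¬ p ∣ M) {r M' : ℕ} (hr : 1 < r)
    (hM : M = r * M') : ∃ f ∈ normalizedFactors μ, ¬ f ∣ X ^ M' - 1 := by
  have hp : p.Prime := Fact.out
  have hM' : M' ≠ 0 := by rintro rfl; exact hpM (hM ▸ dvd_zero p)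
  have hdvd_pow := dvd_X_pow_sub_one_pow_of_dvd_iff hμ
  have hμ0 : μ ≠ 0 := ne_zero_of_dvd_ne_zero
    (pow_ne_zero _ (X_pow_sub_one_ne_zero (hM ▸ mul_ne_zero (by omega) hM'))) hdvd_pow
  by_contra! h
  have hdvd := dvd_pow_of_forall_mem_normalizedFactors hμ0 (X_pow_sub_one_ne_zero hM') h
    fun f _ => count_normalizedFactors_le_of_dvd_pow hμ0 (squarefree_X_pow_sub_one hpM) hdvd_pow f
  rw [X_pow_sub_one_pow_char_pow, hμ, hM] at hdvd
  exact Nat.not_mul_dvd_self_of_one_lt hr (c := M' * p ^ (e + 1))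
    (mul_ne_zero hM' (pow_ne_zero _ hp.ne_zero)) (by convert hdvd using 1; ring)

theorem exists_mem_normalizedFactors_dvd_card_pow_natDegree_sub_one [Fintype F] [DecidableEq F]
    (hμ : ∀ j, μ ∣ X ^ j - 1 ↔ p ^ (e + 1) * M ∣ j) (hpM : ¬ p ∣ M) {r M' : ℕ} (hr : r.Prime)
    (hM : M = r * M') :
    ∃ f ∈ normalizedFactors μ, r ∣ Fintype.card F ^ f.natDegree - 1 := by
  obtain ⟨f, hf, hndvd⟩ := exists_mem_normalizedFactors_not_dvd hμ hpM hr.one_lt hM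
  exact ⟨f, hf, hr.dvd_card_pow_natDegree_sub_one (irreducible_of_normalized_factor f hf)
    (hM ▸ dvd_X_pow_sub_one_of_mem_normalizedFactors hμ hf) hndvd⟩

end CharP

theorem Multiset.replicate_add_val_le {α : Type*} [DecidableEq α] {s : Multiset α}
    {t : Finset α} {a : α} {c : ℕ} (ht : ∀ x ∈ t, x ∈ s) (ha : a ∈ t) (hc : c < s.count a) :
    replicate c a + t.val ≤ s := by
  rw [le_iff_count]
  intro x
  rw [count_add, count_replicate, count_eq_of_nodup t.nodup]
  by_cases hxa : x = a
  · subst hxa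
    simp only [if_true, Finset.mem_val, ha]
    omega
  · by_cases hx : x ∈ t
    · simpa [hx, Ne.symm hxa, Nat.one_le_iff_ne_zero] using ht x hx
    · simp [hx, Ne.symm hxa]

theorem sum_natDegree_le_natDegree_of_le_normalizedFactors {K : Type*} [Field K]
    [DecidableEq K] {μ : K[X]} (hμ : μ ≠ 0) {m : Multiset K[X]} (hm : m ≤ normalizedFactors μ) :
    (m.map natDegree).sum ≤ μ.natDegree := by
  rw [← natDegree_multiset_prod _ fun h => not_irreducible_zero
    (irreducible_of_normalized_factor 0 (Multiset.mem_of_le hm h))]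
  exact natDegree_le_of_dvd ((Multiset.prod_dvd_prod_of_le hm).trans
    (prod_normalizedFactors hμ).dvd) hμ

theorem add_sum_le_natDegree {K : Type*} [Field K] [DecidableEq K] {μ : K[X]} (hμ : μ ≠ 0)
    {c : ℕ} (hc : 0 < c) {f₀ : K[X]} (hf₀ : c < (normalizedFactors μ).count f₀)
    {ι : Type*} [Fintype ι] {b : ι → ℕ} (hb : ∀ i, 2 ≤ b i)
    (hcop : Pairwise fun i j => Nat.Coprime (b i) (b j)) {f : ι → K[X]}
    (hf : ∀ i, f i ∈ normalizedFactors μ) (hbf : ∀ i, b i ∣ (f i).natDegree) :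
    c + 1 + ∑ i, b i ≤ μ.natDegree := by
  have hf₀mem : f₀ ∈ normalizedFactors μ := Multiset.count_pos.1 (by omega)
  have hdeg (g : K[X]) (hg : g ∈ normalizedFactors μ) : 0 < g.natDegree :=
    (irreducible_of_normalized_factor g hg).natDegree_pos
  have hsum : c * f₀.natDegree + ∑ g ∈ insert f₀ (univ.image f), g.natDegree ≤ μ.natDegree := by
    have := sum_natDegree_le_natDegree_of_le_normalizedFactors hμ
      (Multiset.replicate_add_val_le (t := insert f₀ (univ.image f))
        (by simpa [forall_mem_insert] using ⟨hf₀mem, hf⟩) (mem_insert_self _ _) hf₀)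
    simpa only [Multiset.map_add, Multiset.sum_add, Multiset.map_replicate,
      Multiset.sum_replicate, smul_eq_mul, ← Finset.sum_eq_multiset_sum] using this
  have hb_sum := sum_le_sum_image_of_dvd hb hcop f hbf fun i => hdeg _ (hf i)
  by_cases h : f₀ ∈ univ.image f
  · obtain ⟨i, -, rfl⟩ := mem_image.1 h
    rw [insert_eq_of_mem h] at hsum
    nlinarith [Nat.le_of_dvd (hdeg _ (hf i)) (hbf i), hb i]
  · rw [sum_insert h] at hsum
    nlinarith [hdeg _ hf₀mem]

theorem minpoly_dvd_X_pow_sub_one_iff {F A : Type*} [Field F] [Ring A] [Algebra F A] {x : A}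
    {j : ℕ} : minpoly F x ∣ X ^ j - 1 ↔ orderOf x ∣ j := by
  rw [minpoly.dvd_iff, orderOf_dvd_iff_pow_eq_one, map_sub, map_pow, aeval_X, map_one,
    sub_eq_zero]

theorem Matrix.natDegree_minpoly_le {n K : Type*} [Fintype n] [DecidableEq n] [Field K]
    (A : Matrix n n K) : (minpoly K A).natDegree ≤ Fintype.card n :=
  charpoly_natDegree_eq_dim A ▸ natDegree_le_of_dvd (minpoly_dvd_charpoly A)
    (charpoly_monic A).ne_zero

theorem SL_no_element_of_order_general (p m q : ℕ) (hp : p.Prime) (hq : q = p ^ m)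
    (k : ℕ) (b : Fin k → ℕ) (hb : ∀ i, 1 < b i)
    (hcop : ∀ i j, i ≠ j → Nat.Coprime (b i) (b j))
    (s t : ℕ) (hst : (s = 0 ∧ t = 0) ∨ s = p ^ t)
    (n : ℕ) (hn : n = s + ∑ i, b i)
    (r : Fin k → ℕ)
    (hr : ∀ i, (r i).Prime ∧ r i ∣ q ^ b i - 1 ∧
      ∀ j : ℕ, 1 ≤ j → j < b i → ¬ r i ∣ q ^ j - 1)
    (F : Type*) [Field F] [Fintype F] (hF : Fintype.card F = q) :
    ¬ ∃ g : Matrix.SpecialLinearGroup (Fin n) F,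
        orderOf g = p ^ (t + 1) * ∏ i, r i := by
  classical
  rintro ⟨g, hg⟩
  have hppd : ∀ i, Nat.IsPrimitivePrimeDivisor (r i) q (b i) := hr
  have := Fact.mk hp
  have : CharP F p := charP_of_card_eq_prime_pow (hF.trans hq)
  have hq0 : 0 < q := hF ▸ Fintype.card_pos
  have hpq : p ∣ q := hF ▸ (CharP.cast_eq_zero_iff F p _).1 (Nat.cast_card_eq_zero F)
  have hpM : ¬ p ∣ ∏ i, r i := by
    rw [hp.prime.dvd_finsetProd_iff]
    rintro ⟨i, -, hpr⟩
    rw [(Nat.prime_dvd_prime_iff_eq hp (hr i).1).1 hpr] at hpq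
    exact (hppd i).not_dvd hq0 (Nat.zero_lt_of_lt (hb i)) hpq
  set μ := minpoly F (g : Matrix (Fin n) (Fin n) F)
  have hμ (j : ℕ) : μ ∣ X ^ j - 1 ↔ p ^ (t + 1) * ∏ i, r i ∣ j := by
    rw [minpoly_dvd_X_pow_sub_one_iff, ← hg, ← Matrix.SpecialLinearGroup.coeMonoidHom_apply,
      orderOf_injective _ Matrix.SpecialLinearGroup.coeMonoidHom_injective]
  obtain ⟨f₀, -, hf₀⟩ := exists_lt_count_normalizedFactors hμ hpM
  have hfactor (i : Fin k) : ∃ f ∈ normalizedFactors μ, b i ∣ f.natDegree := by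
    obtain ⟨f, hf, hrf⟩ := exists_mem_normalizedFactors_dvd_card_pow_natDegree_sub_one hμ hpM
      (hr i).1 (mul_prod_erase univ r (mem_univ i)).symm
    exact ⟨f, hf, (hppd i).dvd_of_dvd_pow_sub_one hq0 (Nat.zero_lt_of_lt (hb i)) (hF ▸ hrf)⟩
  choose f hf hbf using hfactor
  have hdeg : μ.natDegree ≤ n := (Matrix.natDegree_minpoly_le _).trans_eq (Fintype.card_fin n)
  have hcount := add_sum_le_natDegree (μ := μ) (minpoly.ne_zero (Algebra.IsIntegral.isIntegral _))
    (pow_pos hp.pos t) hf₀ hb hcop hf hbf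
  have hs : s ≤ p ^ t := by rcases hst with ⟨rfl, -⟩ | rfl <;> simp
  omega

/-- If `n = s + b₁ + ⋯ + b_k` with `s = 0` or `s = p^t`, the `bᵢ` pairwise coprime and
greater than `1`, and `rᵢ` a primitive prime divisor of `q^{bᵢ} - 1`, then `SL_n(F_q)`
contains no element of order `p^{t+1}·r₁⋯r_k` (with `t = 0` if `s = 0`). -/
theorem SL_no_element_of_order (p m q : ℕ) (hp : p.Prime) (hm : 0 < m) (hq : q = p ^ m)
    (k : ℕ) (b : Fin k → ℕ) (hb : ∀ i, 1 < b i)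
    (hcop : ∀ i j, i ≠ j → Nat.Coprime (b i) (b j))
    (s t : ℕ) (hst : (s = 0 ∧ t = 0) ∨ s = p ^ t)
    (n : ℕ) (hn : n = s + ∑ i, b i)
    (r : Fin k → ℕ)
    (hr : ∀ i, (r i).Prime ∧ r i ∣ q ^ b i - 1 ∧
      ∀ j : ℕ, 1 ≤ j → j < b i → ¬ r i ∣ q ^ j - 1)
    (F : Type*) [Field F] [Fintype F] (hF : Fintype.card F = q) :
    ¬ ∃ g : Matrix.SpecialLinearGroup (Fin n) F,
        orderOf g = p ^ (t + 1) * ∏ i, r i :=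
  SL_no_element_of_order_general p m q hp hq k b hb hcop s t hst n hn r hr F hF
end

section
/- For every real number x ≥ 22, the half-open interval (x/3, x/2] contains at least one prime number. -/
/-!
Chebyshev's method. Since `log ⌊x⌋₊! = ∑_{n ≤ x} Λ n ⌊x/n⌋`, the combination
`E x = L x - L (x/2) - L (x/3) - L (x/5) + L (x/30)` of `L x = log ⌊x⌋₊!` equals
`∑_{n ≤ x} Λ n w(x/n)` for a sawtooth `w` with values in `{0, 1}` that is `1` on `[1, 6)`;
hence `E x ≤ ψ x ≤ E x + ψ (x/6)`. By Stirling, `E x = A x + O(log x)` with `A = 0.92…`, and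
bounding `ψ (x/18)` by Chebyshev's `log 4` estimate gives
`ψ (x/2) - ψ (x/3) ≥ (A/6 - log 4/18) x - O(√x log x)`. As `ψ - θ = O(√x log x)`, this forces
`θ (x/3) < θ (x/2)` once `x ≥ 2^17`. Below that, a chain of primes, each at most `3/2` times the
previous one, covers `[22, 2^17)`.
-/

open Real Finset Chebyshev
open scoped Nat ArithmeticFunction.vonMangoldt

/-- `∫ t in 1..x, log t`. -/
noncomputable def integralLog (x : ℝ) : ℝ := x * log x - x + 1

lemma sub_mul_log_le_integralLog_sub {a b : ℝ} (ha : 0 < a) (hab : a ≤ b) :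
    (b - a) * log a ≤ integralLog b - integralLog a := by
  have hb : 0 < b := ha.trans_le hab
  have h := mul_le_mul_of_nonneg_left (one_sub_inv_le_log_of_pos (div_pos hb ha)) hb.le
  rw [inv_div, log_div hb.ne' ha.ne', mul_sub, mul_one, mul_div_cancel₀ _ hb.ne'] at h
  unfold integralLog
  linarith

lemma integralLog_sub_le_sub_mul_log {a b : ℝ} (ha : 0 < a) (hab : a ≤ b) :
    integralLog b - integralLog a ≤ (b - a) * log b := by
  have hb : 0 < b := ha.trans_le hab
  have h := mul_le_mul_of_nonneg_left (log_le_sub_one_of_pos (div_pos hb ha)) ha.le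
  rw [log_div hb.ne' ha.ne', mul_sub, mul_sub, mul_one, mul_div_cancel₀ _ ha.ne'] at h
  unfold integralLog
  linarith

lemma log_factorial_succ (n : ℕ) : log ((n + 1)! : ℝ) = log ((n : ℝ) + 1) + log (n ! : ℝ) := by
  rw [Nat.factorial_succ, Nat.cast_mul, log_mul (by positivity) (by positivity)]
  push_cast
  ring

lemma integralLog_le_log_factorial {n : ℕ} (hn : 1 ≤ n) : integralLog n ≤ log (n ! : ℝ) := by
  induction n, hn using Nat.le_induction with
  | base => simp [integralLog]
  | succ n hn ih =>
    have hstep := integralLog_sub_le_sub_mul_log (a := n) (b := n + 1) (by positivity) (by linarith)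
    rw [log_factorial_succ]
    push_cast
    linarith

lemma log_factorial_le_integralLog_add_log {n : ℕ} (hn : 1 ≤ n) :
    log (n ! : ℝ) ≤ integralLog n + log n := by
  induction n, hn using Nat.le_induction with
  | base => simp [integralLog]
  | succ n hn ih =>
    have hstep := sub_mul_log_le_integralLog_sub (a := n) (b := n + 1) (by positivity) (by linarith)
    rw [log_factorial_succ]
    push_cast
    linarith

lemma abs_log_factorial_floor_sub_integralLog_le {x : ℝ} (hx : 1 ≤ x) :
    |log (⌊x⌋₊ ! : ℝ) - integralLog x| ≤ log x := by
  set n := ⌊x⌋₊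
  have hn : 1 ≤ n := Nat.one_le_floor_iff _ |>.mpr hx
  have hn0 : (0 : ℝ) < n := by positivity
  have hnx : (n : ℝ) ≤ x := Nat.floor_le (by linarith)
  have hxn : x - n ≤ 1 := by linarith [Nat.lt_floor_add_one x]
  have hlogn : 0 ≤ log n := log_nonneg (by exact_mod_cast hn)
  have hlogx : log n ≤ log x := log_le_log hn0 hnx
  have hmono : integralLog n ≤ integralLog x := by
    linarith [sub_mul_log_le_integralLog_sub hn0 hnx, mul_nonneg (sub_nonneg.mpr hnx) hlogn]
  have hgap : integralLog x - integralLog n ≤ log x :=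
    (integralLog_sub_le_sub_mul_log hn0 hnx).trans (mul_le_of_le_one_left (hlogn.trans hlogx) hxn)
  rw [abs_le]
  constructor
  · linarith [integralLog_le_log_factorial hn]
  · linarith [log_factorial_le_integralLog_add_log hn]

lemma log_factorial_eq_sum_log (N : ℕ) : log (N ! : ℝ) = ∑ m ∈ Ioc 0 N, log m := by
  induction N with
  | zero => simp
  | succ N ih =>
    rw [log_factorial_succ, ih, sum_Ioc_succ_top (Nat.zero_le N), add_comm, Nat.cast_succ]

lemma log_factorial_eq_sum_vonMangoldt_mul_div {N M : ℕ} (hNM : N ≤ M) :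
    log (N ! : ℝ) = ∑ n ∈ Ioc 0 M, Λ n * (N / n : ℕ) := by
  have hdiv : ∀ m ∈ Ioc 0 N, log m = ∑ n ∈ Ioc 0 M, if n ∣ m then Λ n else 0 := by
    intro m hm
    rw [mem_Ioc] at hm
    rw [← sum_filter, ← ArithmeticFunction.vonMangoldt_sum]
    congr 1
    ext n
    simp only [Nat.mem_divisors, mem_filter, mem_Ioc]
    constructor
    · rintro ⟨hnm, -⟩
      exact ⟨⟨Nat.pos_of_dvd_of_pos hnm hm.1, (Nat.le_of_dvd hm.1 hnm).trans (hm.2.trans hNM)⟩, hnm⟩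
    · rintro ⟨-, hnm⟩
      exact ⟨hnm, by omega⟩
  rw [log_factorial_eq_sum_log, sum_congr rfl hdiv, sum_comm]
  refine sum_congr rfl fun n _ => ?_
  rw [← sum_filter, sum_const, ← Nat.Ioc_filter_dvd_card_eq_div, nsmul_eq_mul, mul_comm]

def chebyshevWeight (q : ℕ) : ℤ := q - (q / 2 : ℕ) - (q / 3 : ℕ) - (q / 5 : ℕ) + (q / 30 : ℕ)

lemma chebyshevWeight_nonneg (q : ℕ) : 0 ≤ chebyshevWeight q := by
  unfold chebyshevWeight; omega

lemma chebyshevWeight_le_one (q : ℕ) : chebyshevWeight q ≤ 1 := by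
  unfold chebyshevWeight; omega

lemma chebyshevWeight_eq_one {q : ℕ} (h1 : 1 ≤ q) (h5 : q ≤ 5) : chebyshevWeight q = 1 := by
  unfold chebyshevWeight; omega

noncomputable def chebyshevE (x : ℝ) : ℝ :=
  log (⌊x⌋₊ ! : ℝ) - log (⌊x / 2⌋₊ ! : ℝ) - log (⌊x / 3⌋₊ ! : ℝ) - log (⌊x / 5⌋₊ ! : ℝ)
    + log (⌊x / 30⌋₊ ! : ℝ)

lemma log_factorial_div_eq_sum (N k : ℕ) :
    log ((N / k)! : ℝ) = ∑ n ∈ Ioc 0 N, Λ n * (N / n / k : ℕ) := by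
  rw [log_factorial_eq_sum_vonMangoldt_mul_div (Nat.div_le_self N k)]
  simp only [Nat.div_div_eq_div_mul, mul_comm k]

lemma chebyshevE_eq_sum (x : ℝ) :
    chebyshevE x = ∑ n ∈ Ioc 0 ⌊x⌋₊, Λ n * chebyshevWeight (⌊x⌋₊ / n) := by
  rw [chebyshevE, log_factorial_eq_sum_vonMangoldt_mul_div le_rfl]
  simp only [Nat.floor_div_ofNat, log_factorial_div_eq_sum, ← sum_sub_distrib, ← sum_add_distrib]
  refine sum_congr rfl fun n _ => ?_
  simp only [chebyshevWeight, Int.cast_add, Int.cast_sub, Int.cast_natCast]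
  ring

lemma chebyshevE_le_psi (x : ℝ) : chebyshevE x ≤ ψ x := by
  rw [chebyshevE_eq_sum, psi]
  refine sum_le_sum fun n _ => mul_le_of_le_one_right ArithmeticFunction.vonMangoldt_nonneg ?_
  exact_mod_cast chebyshevWeight_le_one _

lemma psi_le_chebyshevE_add_psi_div_six (x : ℝ) : ψ x ≤ chebyshevE x + ψ (x / 6) := by
  set N := ⌊x⌋₊
  have hsplit : ψ (x / 6) + ∑ n ∈ Ioc (N / 6) N, Λ n = ψ x := by
    rw [psi, psi, Nat.floor_div_ofNat]
    exact sum_Ioc_consecutive _ (Nat.zero_le _) (Nat.div_le_self N 6)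
  have htop : ∑ n ∈ Ioc (N / 6) N, Λ n ≤ chebyshevE x := by
    rw [chebyshevE_eq_sum]
    calc ∑ n ∈ Ioc (N / 6) N, Λ n
        = ∑ n ∈ Ioc (N / 6) N, Λ n * chebyshevWeight (N / n) := by
          refine sum_congr rfl fun n hn => ?_
          rw [mem_Ioc] at hn
          have hn0 : 0 < n := by omega
          rw [chebyshevWeight_eq_one ((Nat.one_le_div_iff hn0).mpr hn.2)
            (Nat.lt_succ_iff.mp ((Nat.div_lt_iff_lt_mul hn0).mpr (by omega)))]
          simp
      _ ≤ ∑ n ∈ Ioc 0 N, Λ n * chebyshevWeight (N / n) := by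
          refine sum_le_sum_of_subset_of_nonneg (Ioc_subset_Ioc_left (Nat.zero_le _))
            fun n _ _ => mul_nonneg ArithmeticFunction.vonMangoldt_nonneg ?_
          exact_mod_cast chebyshevWeight_nonneg _
  linarith

noncomputable def chebyshevConst : ℝ := log 2 / 2 + log 3 / 3 + log 5 / 5 - log 30 / 30

lemma integralLog_chebyshev_combination {x : ℝ} (hx : 0 < x) :
    integralLog x - integralLog (x / 2) - integralLog (x / 3) - integralLog (x / 5)
      + integralLog (x / 30) = chebyshevConst * x - 1 := by
  simp only [integralLog, chebyshevConst]
  rw [log_div hx.ne' two_ne_zero, log_div hx.ne' three_ne_zero, log_div hx.ne' (by norm_num),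
    log_div hx.ne' (by norm_num)]
  ring

lemma nine_div_ten_le_chebyshevConst : (9 / 10 : ℝ) ≤ chebyshevConst := by
  have h30 : log 30 = log 2 + log 3 + log 5 := by
    rw [← log_mul two_ne_zero three_ne_zero, ← log_mul (by norm_num) (by norm_num)]
    norm_num
  have h5 : 2 * log 2 + 1 / 5 ≤ log 5 := by
    have h := one_sub_inv_le_log_of_pos (x := 5 / 4) (by norm_num)
    rw [log_div (by norm_num) (by norm_num), show (4 : ℝ) = 2 ^ 2 by norm_num, log_pow] at h
    norm_num at h
    linarith
  rw [chebyshevConst, h30]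
  linarith [log_two_gt_d9, log_three_gt_d9]

lemma abs_chebyshevE_sub_le {x : ℝ} (hx : 30 ≤ x) :
    |chebyshevE x - (chebyshevConst * x - 1)| ≤ 5 * log x := by
  have hterm (k : ℝ) (hk : 1 ≤ k) (hkx : k ≤ 30) :
      |log (⌊x / k⌋₊ ! : ℝ) - integralLog (x / k)| ≤ log x := by
    have hxk : 1 ≤ x / k := by rw [le_div_iff₀ (by linarith)]; linarith
    refine (abs_log_factorial_floor_sub_integralLog_le hxk).trans (log_le_log (by linarith) ?_)
    exact div_le_self (by linarith) hk
  have h1 := hterm 1 le_rfl (by norm_num)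
  have h2 := hterm 2 (by norm_num) (by norm_num)
  have h3 := hterm 3 (by norm_num) (by norm_num)
  have h5 := hterm 5 (by norm_num) (by norm_num)
  have h30 := hterm 30 (by norm_num) le_rfl
  rw [div_one] at h1
  rw [abs_le] at *
  have hcomb := integralLog_chebyshev_combination (by linarith : 0 < x)
  unfold chebyshevE
  constructor <;> linarith

lemma theta_third_lt_theta_half {x : ℝ} (hx : 2 ^ 17 ≤ x) : θ (x / 3) < θ (x / 2) := by
  set s := √(x / 2) with hs
  set L := log (x / 2) with hL
  have hx0 : 0 ≤ x := by linarith
  have hs2 : s ^ 2 = x / 2 := sq_sqrt (by linarith)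
  have hs256 : 256 ≤ s := le_sqrt_of_sq_le (by linarith)
  have hs0 : 0 ≤ s := by linarith
  -- tangent line of `log` at `2 ^ 8`
  have htangent : L ≤ 9.1 + s / 128 := by
    have h := log_le_sub_one_of_pos (x := s / 256) (by positivity)
    rw [log_div (by positivity) (by norm_num), show (256 : ℝ) = 2 ^ 8 by norm_num, log_pow] at h
    have hLs : L = 2 * log s := by rw [hL, ← hs2, log_pow]; norm_num
    linarith [log_two_lt_d9]
  have hhalf : chebyshevConst * (x / 2) - 1 - 5 * L - 2 * s * L ≤ θ (x / 2) := by
    have hE := (abs_le.mp (abs_chebyshevE_sub_le (x := x / 2) (by linarith))).1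
    linarith [chebyshevE_le_psi (x / 2), psi_sub_theta_le (x := x / 2) (by linarith)]
  have hthird :
      θ (x / 3) ≤ chebyshevConst * (x / 3) - 1 + 5 * L + log 4 * (x / 18) + 2 * (s / 3) * L := by
    have hE := (abs_le.mp (abs_chebyshevE_sub_le (x := x / 3) (by linarith))).2
    have hψ := psi_le_chebyshevE_add_psi_div_six (x / 3)
    have hψ18 := Chebyshev.psi_le (x := x / 18) (by linarith)
    rw [show x / 3 / 6 = x / 18 by ring] at hψ
    have hsqrt : √(x / 18) = s / 3 := by
      rw [hs, show x / 18 = (x / 2) / 3 ^ 2 by ring, sqrt_div' _ (by norm_num),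
        sqrt_sq (by norm_num)]
    rw [hsqrt] at hψ18
    have hlog3 : log (x / 3) ≤ L := log_le_log (by positivity) (by linarith)
    have hlog18 : 2 * (s / 3) * log (x / 18) ≤ 2 * (s / 3) * L := by
      gcongr
      exact log_le_log (by positivity) (by linarith)
    linarith [theta_le_psi (x / 3)]
  have hlog4 : log 4 < 1.3863 := by
    rw [show (4 : ℝ) = 2 ^ 2 by norm_num, log_pow]
    linarith [log_two_lt_d9]
  linarith [mul_le_mul_of_nonneg_left htangent hs0, mul_le_mul_of_nonneg_left hs256 hs0,
    mul_le_mul_of_nonneg_right nine_div_ten_le_chebyshevConst hx0,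
    mul_le_mul_of_nonneg_right hlog4.le hx0]

lemma exists_prime_of_theta_lt {a b : ℝ} (h : θ a < θ b) :
    ∃ p : ℕ, p.Prime ∧ a < p ∧ (p : ℝ) ≤ b := by
  by_contra! hno
  refine h.not_ge (sum_le_sum_of_subset_of_nonneg ?_ fun p _ _ => log_natCast_nonneg p)
  intro p hp
  simp only [mem_filter, mem_Ioc] at hp ⊢
  have hpb : (p : ℝ) ≤ b := (Nat.le_floor_iff' (by omega)).mp hp.1.2
  have hpa : (p : ℝ) ≤ a := not_lt.mp fun hap => (hno p hp.2 hap).not_ge hpb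
  exact ⟨⟨hp.1.1, Nat.le_floor hpa⟩, hp.2⟩

lemma exists_prime_of_chain_step {x : ℝ} (p q : ℕ) (hp : p.Prime) (hpq : 2 * p ≤ 3 * q)
    (hq : x < 3 * q → ∃ r : ℕ, r.Prime ∧ x / 3 < r ∧ (r : ℝ) ≤ x / 2) (hx : x < 3 * p) :
    ∃ r : ℕ, r.Prime ∧ x / 3 < r ∧ (r : ℝ) ≤ x / 2 := by
  have hpq' : (2 * p : ℝ) ≤ 3 * q := by exact_mod_cast hpq
  by_cases h : 2 * (p : ℝ) ≤ x
  · exact ⟨p, hp, by linarith, by linarith⟩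
  · exact hq (by linarith)

lemma exists_prime_third_half_of_lt {x : ℝ} (hx : 22 ≤ x) (hx' : x < 2 ^ 17) :
    ∃ p : ℕ, p.Prime ∧ x / 3 < p ∧ (p : ℝ) ≤ x / 2 := by
  have hlt : x < 3 * (53951 : ℕ) := by push_cast; linarith
  revert hlt
  refine exists_prime_of_chain_step 53951 35969 (by norm_num) (by norm_num) ?_
  refine exists_prime_of_chain_step 35969 23981 (by norm_num) (by norm_num) ?_
  refine exists_prime_of_chain_step 23981 15991 (by norm_num) (by norm_num) ?_
  refine exists_prime_of_chain_step 15991 10667 (by norm_num) (by norm_num) ?_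
  refine exists_prime_of_chain_step 10667 7121 (by norm_num) (by norm_num) ?_
  refine exists_prime_of_chain_step 7121 4751 (by norm_num) (by norm_num) ?_
  refine exists_prime_of_chain_step 4751 3169 (by norm_num) (by norm_num) ?_
  refine exists_prime_of_chain_step 3169 2113 (by norm_num) (by norm_num) ?_
  refine exists_prime_of_chain_step 2113 1409 (by norm_num) (by norm_num) ?_
  refine exists_prime_of_chain_step 1409 941 (by norm_num) (by norm_num) ?_
  refine exists_prime_of_chain_step 941 631 (by norm_num) (by norm_num) ?_
  refine exists_prime_of_chain_step 631 421 (by norm_num) (by norm_num) ?_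
  refine exists_prime_of_chain_step 421 283 (by norm_num) (by norm_num) ?_
  refine exists_prime_of_chain_step 283 193 (by norm_num) (by norm_num) ?_
  refine exists_prime_of_chain_step 193 131 (by norm_num) (by norm_num) ?_
  refine exists_prime_of_chain_step 131 89 (by norm_num) (by norm_num) ?_
  refine exists_prime_of_chain_step 89 61 (by norm_num) (by norm_num) ?_
  refine exists_prime_of_chain_step 61 43 (by norm_num) (by norm_num) ?_
  refine exists_prime_of_chain_step 43 31 (by norm_num) (by norm_num) ?_
  refine exists_prime_of_chain_step 31 23 (by norm_num) (by norm_num) ?_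
  refine exists_prime_of_chain_step 23 19 (by norm_num) (by norm_num) ?_
  refine exists_prime_of_chain_step 19 13 (by norm_num) (by norm_num) ?_
  refine exists_prime_of_chain_step 13 11 (by norm_num) (by norm_num) ?_
  intro h
  exact ⟨11, by norm_num, by push_cast at h; linarith, by push_cast; linarith⟩

/-- For every real `x ≥ 22`, the interval `(x/3, x/2]` contains a prime. -/
theorem exists_prime_between_third_and_half (x : ℝ) (hx : 22 ≤ x) :
    ∃ p : ℕ, p.Prime ∧ x / 3 < (p : ℝ) ∧ (p : ℝ) ≤ x / 2 := by
  rcases lt_or_ge x (2 ^ 17) with hsmall | hlarge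
  · exact exists_prime_third_half_of_lt hx hsmall
  · exact exists_prime_of_theta_lt (theta_third_lt_theta_half hlarge)
end

section
/- For every real number x > 45, the open interval (3x/4, x − 8) contains at least one prime number. -/
/-!
Chebyshev's method, with the weight `n! ⌊n/30⌋! / (⌊n/2⌋! ⌊n/3⌋! ⌊n/5⌋!)`. The integer
`a + ⌊a/30⌋ - ⌊a/2⌋ - ⌊a/3⌋ - ⌊a/5⌋` lies in `{0, 1}` and equals `1` for `1 ≤ a ≤ 5`, so by
Legendre's formula the weight divides `lcm(1..n)` and is divisible by `lcm(1..n) / lcm(1..n/6)`.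
By Stirling its logarithm is `A n + O(log n)`, where
`A = log (2^(1/2) 3^(1/3) 5^(1/5) / 30^(1/30)) ≈ 0.92`. Hence `A n - O(log n) ≤ ψ(n)`, and
telescoping along `n, n/6, n/36, …` gives `ψ(n) ≤ 6/5 A n + O(√n)`. If no prime lay in `(n, m]`
with `m ≈ 4n/3`, then `A m - O(log m) ≤ ψ(m) ≤ θ(m) + O(√m log m) = θ(n) + O(√m log m)
≤ 6/5 A n + O(√m log m)`, which is false once `n ≥ 10⁶`. Below that range, the windows
`(q + 8, 4q/3)` of the primes `q = 37, 41, 43, …, 1319893` overlap and cover `(45, 4·1319893/3)`.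
-/

open Real Finset
open scoped Nat

lemma log_le_log_of_dvd {a b : ℕ} (hb : b ≠ 0) (h : a ∣ b) : log a ≤ log b := by
  rcases eq_or_ne a 0 with rfl | ha
  · simp [log_natCast_nonneg]
  exact log_le_log (by positivity) (by exact_mod_cast Nat.le_of_dvd (by positivity) h)

lemma log_factorial_le {n : ℕ} (hn : n ≠ 0) : log n ! ≤ n * log n - n + log n / 2 + 1 := by
  obtain ⟨k, rfl⟩ := Nat.exists_eq_succ_of_ne_zero hn
  have h := Stirling.log_stirlingSeq'_antitone (Nat.zero_le k)
  simp only [Function.comp_apply, Nat.succ_eq_add_one, zero_add, Stirling.stirlingSeq_one,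
    Stirling.log_stirlingSeq_formula] at h
  have hk : (0 : ℝ) < (k + 1 : ℕ) := by positivity
  rw [log_div (exp_pos 1).ne' (by positivity), log_exp, log_sqrt zero_le_two,
    log_mul two_ne_zero hk.ne', log_div hk.ne' (exp_pos 1).ne', log_exp] at h
  linarith

lemma le_log_factorial (n : ℕ) : n * log n - n ≤ log n ! := by
  rcases eq_or_ne n 0 with rfl | hn
  · simp
  have := Stirling.le_log_factorial_stirling hn
  have : 0 ≤ log n := log_natCast_nonneg n
  have : 0 ≤ log (2 * π) := log_nonneg (by linarith [pi_gt_three])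
  linarith

lemma abs_log_factorial_floor_sub_le {t : ℝ} (ht : 1 ≤ t) :
    |log (⌊t⌋₊ !) - (t * log t - t)| ≤ log t + 1 := by
  set a := ⌊t⌋₊
  have ha₁ : 1 ≤ a := Nat.one_le_floor_iff t |>.mpr ht
  have ha : (1 : ℝ) ≤ a := by exact_mod_cast ha₁
  have hat : (a : ℝ) ≤ t := Nat.floor_le (by linarith)
  have hta : t < a + 1 := Nat.lt_floor_add_one t
  have hlog_t : 0 ≤ log t := log_nonneg ht
  have hlog_a : log a ≤ log t := log_le_log (by linarith) hat
  -- `1 - a / t ≤ log (t / a) ≤ t / a - 1`, cleared of denominators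
  have hquot : log (t / a) = log t - log a := log_div (by linarith) (by linarith)
  have hlower := one_sub_inv_le_log_of_pos (show 0 < t / a by positivity)
  have hupper := log_le_sub_one_of_pos (show 0 < t / a by positivity)
  rw [inv_div, hquot, one_sub_div (by linarith)] at hlower
  rw [hquot, div_sub_one (by linarith)] at hupper
  rw [div_le_iff₀ (by linarith)] at hlower
  rw [le_div_iff₀ (by linarith)] at hupper
  have hlog_t' : t - 1 ≤ t * log t :=
    calc t - 1 = t * (1 - t⁻¹) := by field_simp
      _ ≤ t * log t := by gcongr; exact one_sub_inv_le_log_of_pos (by linarith)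
  have hg_le : a * log a - a ≤ t * log t - t := by
    have key : 0 ≤ t * ((t * log t - t) - (a * log a - a)) := by
      nlinarith [mul_le_mul_of_nonneg_left hlower (by linarith : (0 : ℝ) ≤ a),
        mul_le_mul_of_nonneg_left hlog_t' (by linarith : 0 ≤ t - a),
        mul_nonneg (by linarith : 0 ≤ t - a) (by linarith : (0 : ℝ) ≤ a - 1)]
    nlinarith [nonneg_of_mul_nonneg_right key (by linarith : (0 : ℝ) < t)]
  have hg_sub : t * log t - t - (a * log a - a) ≤ log t := by
    nlinarith [mul_le_mul_of_nonneg_right (by linarith : t - a ≤ 1) hlog_t]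
  have := log_factorial_le (by omega : a ≠ 0)
  have := le_log_factorial a
  rw [abs_le]; constructor <;> linarith

lemma abs_log_factorial_div_sub_le {n k : ℕ} (hk : k ≠ 0) (hkn : k ≤ n) :
    |log (n / k)! - (n / k * log (n / k) - n / k : ℝ)| ≤ log n + 1 := by
  have hk' : (0 : ℝ) < k := by positivity
  have ht : 1 ≤ (n / k : ℝ) := by rw [le_div_iff₀ hk']; exact_mod_cast (by omega : 1 * k ≤ n)
  have h := abs_log_factorial_floor_sub_le ht
  rw [Nat.floor_div_eq_div] at h
  refine h.trans (add_le_add_left (log_le_log (by linarith) ?_) 1)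
  exact div_le_self (by linarith) (by exact_mod_cast Nat.one_le_iff_ne_zero.mpr hk)

lemma log_le_div_thousand_add_six {x : ℝ} (hx : 0 < x) : log x ≤ x / 1000 + 6 := by
  have h1000 : 1000 < exp 7 :=
    calc (1000 : ℝ) < 2.7182818283 ^ 7 := by norm_num
      _ < exp 1 ^ 7 := by gcongr; exact exp_one_gt_d9
      _ = exp 7 := by rw [← exp_nat_mul]; norm_num
  have h := log_le_sub_one_of_pos (div_pos hx (exp_pos 7))
  rw [log_div hx.ne' (exp_pos 7).ne', log_exp] at h
  have : x / exp 7 ≤ x / 1000 := div_le_div_of_nonneg_left hx.le (by norm_num) h1000.le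
  linarith

lemma log_add_one_le_two_mul_sqrt {x : ℝ} (hx : 0 < x) : log x + 1 ≤ 2 * √x := by
  have h := log_le_sub_one_of_pos (sqrt_pos.mpr hx)
  rw [log_sqrt hx.le] at h
  linarith

theorem Nat.factorization_factorial_div {p : ℕ} (hp : p.Prime) (n k : ℕ) :
    ((n / k)!).factorization p = ∑ i ∈ Ico 1 (Nat.log p n + 1), n / p ^ i / k := by
  rw [Nat.factorization_factorial hp
    (Nat.lt_succ_of_le (Nat.log_mono_right (Nat.div_le_self n k)))]
  exact sum_congr rfl fun i _ => by
    rw [Nat.div_div_eq_div_mul, Nat.div_div_eq_div_mul, Nat.mul_comm]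

namespace Chebyshev

def weightNum (n : ℕ) : ℕ := n ! * (n / 30)!

def weightDen (n : ℕ) : ℕ := (n / 2)! * (n / 3)! * (n / 5)!

lemma weightNum_ne_zero (n : ℕ) : weightNum n ≠ 0 := by unfold weightNum; positivity

lemma weightDen_ne_zero (n : ℕ) : weightDen n ≠ 0 := by unfold weightDen; positivity

lemma factorization_weightNum {p : ℕ} (hp : p.Prime) (n : ℕ) :
    (weightNum n).factorization p =
      ∑ i ∈ Ico 1 (Nat.log p n + 1), (n / p ^ i + n / p ^ i / 30) := by
  have h := Nat.factorization_factorial_div hp n 1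
  simp only [Nat.div_one] at h
  rw [weightNum, Nat.factorization_mul (by positivity) (by positivity), Finsupp.add_apply, h,
    Nat.factorization_factorial_div hp, sum_add_distrib]

lemma factorization_weightDen {p : ℕ} (hp : p.Prime) (n : ℕ) :
    (weightDen n).factorization p =
      ∑ i ∈ Ico 1 (Nat.log p n + 1), (n / p ^ i / 2 + n / p ^ i / 3 + n / p ^ i / 5) := by
  rw [weightDen, Nat.factorization_mul (by positivity) (by positivity),
    Nat.factorization_mul (by positivity) (by positivity), Finsupp.add_apply, Finsupp.add_apply,
    Nat.factorization_factorial_div hp, Nat.factorization_factorial_div hp,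
    Nat.factorization_factorial_div hp, sum_add_distrib, sum_add_distrib]

lemma factorization_weightNum_le {p : ℕ} (hp : p.Prime) (n : ℕ) :
    (weightNum n).factorization p ≤ (weightDen n).factorization p + Nat.log p n := by
  rw [factorization_weightNum hp, factorization_weightDen hp]
  calc _ ≤ ∑ i ∈ Ico 1 (Nat.log p n + 1), (n / p ^ i / 2 + n / p ^ i / 3 + n / p ^ i / 5 + 1) :=
        sum_le_sum fun i _ => by omega
    _ = _ := by simp [sum_add_distrib]

lemma factorization_weightDen_add_le {p : ℕ} (hp : p.Prime) (n : ℕ) :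
    (weightDen n).factorization p + (Nat.log p n - Nat.log p (n / 6)) ≤
      (weightNum n).factorization p := by
  set L := Nat.log p n
  set L₆ := Nat.log p (n / 6)
  have hL₆ : L₆ ≤ L := Nat.log_mono_right (Nat.div_le_self n 6)
  rw [factorization_weightNum hp, factorization_weightDen hp,
    ← Ico_union_Ico_eq_Ico (Nat.le_add_left 1 L₆) (Nat.add_le_add_right hL₆ 1),
    sum_union (Ico_disjoint_Ico_consecutive _ _ _), sum_union (Ico_disjoint_Ico_consecutive _ _ _)]
  -- for `L₆ < i ≤ L` we have `n / 6 < p ^ i ≤ n`, so `n / p ^ i` lies in `1..5`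
  have hlarge : ∀ i ∈ Ico (L₆ + 1) (L + 1), 1 ≤ n / p ^ i ∧ n / p ^ i ≤ 5 := by
    intro i hi
    rw [mem_Ico] at hi
    have hn : n ≠ 0 := by rintro rfl; simp [L] at hi; omega
    have hle : p ^ i ≤ n := Nat.pow_le_of_le_log hn (by omega)
    have hlt : n / 6 < p ^ i := Nat.lt_pow_of_log_lt hp.one_lt (by omega)
    exact ⟨(Nat.one_le_div_iff (pow_pos hp.pos i)).mpr hle,
      Nat.le_of_lt_succ ((Nat.div_lt_iff_lt_mul (pow_pos hp.pos i)).mpr (by omega))⟩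
  have hsmall := sum_le_sum fun i (_ : i ∈ Ico 1 (L₆ + 1)) =>
    show n / p ^ i / 2 + n / p ^ i / 3 + n / p ^ i / 5 ≤ n / p ^ i + n / p ^ i / 30 by omega
  have hbig := sum_le_sum fun i hi =>
    show n / p ^ i / 2 + n / p ^ i / 3 + n / p ^ i / 5 + 1 ≤ n / p ^ i + n / p ^ i / 30 by
      have := hlarge i hi; omega
  rw [sum_add_distrib, sum_const, Nat.card_Ico, smul_eq_mul, mul_one] at hbig
  omega

lemma weightNum_dvd_weightDen_mul_lcmUpto (n : ℕ) :
    weightNum n ∣ weightDen n * Nat.lcmUpto n := by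
  rw [← Nat.factorization_le_iff_dvd (weightNum_ne_zero n)
    (mul_ne_zero (weightDen_ne_zero n) (Nat.lcmUpto_ne_zero n))]
  intro p
  by_cases hp : p.Prime
  · rw [Nat.factorization_mul (weightDen_ne_zero n) (Nat.lcmUpto_ne_zero n), Finsupp.add_apply,
      Nat.factorization_lcmUpto n hp]
    exact factorization_weightNum_le hp n
  · simp [Nat.factorization_eq_zero_of_not_prime _ hp]

lemma lcmUpto_mul_weightDen_dvd (n : ℕ) :
    Nat.lcmUpto n * weightDen n ∣ weightNum n * Nat.lcmUpto (n / 6) := by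
  rw [← Nat.factorization_le_iff_dvd (mul_ne_zero (Nat.lcmUpto_ne_zero n) (weightDen_ne_zero n))
    (mul_ne_zero (weightNum_ne_zero n) (Nat.lcmUpto_ne_zero _))]
  intro p
  by_cases hp : p.Prime
  · rw [Nat.factorization_mul (Nat.lcmUpto_ne_zero n) (weightDen_ne_zero n),
      Nat.factorization_mul (weightNum_ne_zero n) (Nat.lcmUpto_ne_zero _), Finsupp.add_apply,
      Finsupp.add_apply, Nat.factorization_lcmUpto n hp, Nat.factorization_lcmUpto _ hp]
    have := factorization_weightDen_add_le hp n
    have := Nat.log_mono_right (b := p) (Nat.div_le_self n 6)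
    omega
  · simp [Nat.factorization_eq_zero_of_not_prime _ hp]

lemma log_weightNum_sub_log_weightDen_le_psi (n : ℕ) :
    log (weightNum n) - log (weightDen n) ≤ ψ n := by
  have := log_le_log_of_dvd (mul_ne_zero (weightDen_ne_zero n) (Nat.lcmUpto_ne_zero n))
    (weightNum_dvd_weightDen_mul_lcmUpto n)
  rw [Nat.cast_mul, log_mul (by simp [weightDen_ne_zero]) (by simp [Nat.lcmUpto_ne_zero])] at this
  rw [psi_eq_log_lcmUpto]
  linarith

lemma psi_le_psi_div_six_add (n : ℕ) :
    ψ n ≤ ψ (n / 6 : ℕ) + (log (weightNum n) - log (weightDen n)) := by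
  have := log_le_log_of_dvd (mul_ne_zero (weightNum_ne_zero n) (Nat.lcmUpto_ne_zero _))
    (lcmUpto_mul_weightDen_dvd n)
  rw [Nat.cast_mul, Nat.cast_mul,
    log_mul (by simp [Nat.lcmUpto_ne_zero]) (by simp [weightDen_ne_zero]),
    log_mul (by simp [weightNum_ne_zero]) (by simp [Nat.lcmUpto_ne_zero])] at this
  rw [psi_eq_log_lcmUpto, psi_eq_log_lcmUpto]
  linarith

noncomputable def weightConst : ℝ := 7 / 15 * log 2 + 3 / 10 * log 3 + 1 / 6 * log 5

lemma abs_log_weightNum_sub_log_weightDen_sub_le {n : ℕ} (hn : 30 ≤ n) :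
    |log (weightNum n) - log (weightDen n) - weightConst * n| ≤ 5 * (log n + 1) := by
  have h₁ := abs_log_factorial_div_sub_le one_ne_zero (by omega : 1 ≤ n)
  have h₂ := abs_log_factorial_div_sub_le two_ne_zero (by omega : 2 ≤ n)
  have h₃ := abs_log_factorial_div_sub_le three_ne_zero (by omega : 3 ≤ n)
  have h₅ := abs_log_factorial_div_sub_le (by norm_num : 5 ≠ 0) (by omega : 5 ≤ n)
  have h₃₀ := abs_log_factorial_div_sub_le (by norm_num : 30 ≠ 0) hn
  simp only [Nat.div_one, Nat.cast_one, div_one] at h₁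
  have hn0 : (n : ℝ) ≠ 0 := by positivity
  have hlogs : log 30 = log 2 + log 3 + log 5 := by
    rw [← log_mul two_ne_zero three_ne_zero, ← log_mul (by norm_num) (by norm_num)]; norm_num
  simp only [weightNum, weightDen, Nat.cast_mul]
  rw [log_mul (by positivity) (by positivity), log_mul (by positivity) (by positivity),
    log_mul (by positivity) (by positivity)]
  rw [log_div hn0 (by norm_num)] at h₂ h₃ h₅ h₃₀
  rw [abs_le] at h₁ h₂ h₃ h₅ h₃₀ ⊢
  constructor <;>
  · simp only [Nat.cast_ofNat, weightConst, hlogs] at *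
    linarith [h₁.1, h₁.2, h₂.1, h₂.2, h₃.1, h₃.2, h₅.1, h₅.2, h₃₀.1, h₃₀.2]

lemma nine_tenths_lt_weightConst : 9 / 10 < weightConst := by
  have hlog : 30 * weightConst = log (2 ^ 14 * 3 ^ 9 * 5 ^ 5) := by
    rw [log_mul (by norm_num) (by norm_num), log_mul (by norm_num) (by norm_num), log_pow,
      log_pow, log_pow, weightConst]
    push_cast; ring
  have hexp : exp 27 < 2 ^ 14 * 3 ^ 9 * 5 ^ 5 :=
    calc exp 27 = exp 1 ^ 27 := by rw [← exp_nat_mul]; norm_num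
      _ < 2.7182818286 ^ 27 := by gcongr; exact exp_one_lt_d9
      _ < 2 ^ 14 * 3 ^ 9 * 5 ^ 5 := by norm_num
  have := (lt_log_iff_exp_lt (by norm_num)).mpr hexp
  linarith

lemma weightConst_nonneg : 0 ≤ weightConst := by linarith [nine_tenths_lt_weightConst]

lemma psi_le_six_fifths_mul_weightConst (n : ℕ) :
    ψ n ≤ 6 / 5 * weightConst * n + 20 * √n + 200 := by
  induction n using Nat.strong_induction_on with
  | _ n ih =>
  have hA := weightConst_nonneg
  rcases lt_or_ge n 30 with hn | hn
  · have h4 : log 4 < 2 := by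
      rw [show (4 : ℝ) = 2 ^ 2 by norm_num, log_pow]; push_cast; linarith [log_two_lt_d9]
    have hn' : (n : ℝ) ≤ 30 := by exact_mod_cast hn.le
    nlinarith [psi_le_const_mul_self (Nat.cast_nonneg n : (0 : ℝ) ≤ n), sqrt_nonneg (n : ℝ)]
  have hn0 : (0 : ℝ) < n := by positivity
  have hdiv : ((n / 6 : ℕ) : ℝ) ≤ n / 6 := Nat.cast_div_le
  have hsqrt : √(n / 6 : ℕ) ≤ √n / 2 := by
    rw [show √n / 2 = √(n / 4) by rw [sqrt_div' _ (by norm_num : (0 : ℝ) ≤ 4)]; norm_num]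
    exact sqrt_le_sqrt (by linarith)
  have := abs_le.mp (abs_log_weightNum_sub_log_weightDen_sub_le hn)
  have := log_add_one_le_two_mul_sqrt hn0
  have := ih (n / 6) (by omega)
  have := psi_le_psi_div_six_add n
  nlinarith

lemma theta_eq_of_forall_not_prime {n m : ℕ} (hnm : n ≤ m)
    (h : ∀ p, n < p → p ≤ m → ¬ p.Prime) : θ m = θ n := by
  rw [theta_eq_sum_primesLE_log, theta_eq_sum_primesLE_log]
  congr 1
  ext p
  simp only [Nat.mem_primesLE]
  constructor
  · rintro ⟨hpm, hp⟩
    exact ⟨not_lt.mp fun hnp => h p hnp hpm hp, hp⟩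
  · rintro ⟨hpn, hp⟩
    exact ⟨hpn.trans hnm, hp⟩

lemma six_fifths_mul_add_lt_weightConst_mul_sub {n m : ℕ} (hn : 10 ^ 6 ≤ n)
    (hm : 4 * n ≤ 3 * m + 32) (hm' : 3 * m ≤ 4 * n) :
    6 / 5 * weightConst * n + 20 * √n + 200 + 2 * √m * log m <
      weightConst * m - 5 * (log m + 1) := by
  have hnR : (10 ^ 6 : ℝ) ≤ n := by exact_mod_cast hn
  have hmR : 4 * (n : ℝ) ≤ 3 * m + 32 := by exact_mod_cast hm
  have hmR' : 3 * (m : ℝ) ≤ 4 * n := by exact_mod_cast hm'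
  have hm0 : (0 : ℝ) < m := by linarith
  set s := √(n : ℝ) with hs_def
  set t := √(m : ℝ) with ht_def
  have hs : s ^ 2 = n := sq_sqrt (by positivity)
  have ht : t ^ 2 = m := sq_sqrt hm0.le
  have hs0 : 0 ≤ s := sqrt_nonneg _
  have ht0 : 0 < t := sqrt_pos.mpr hm0
  have hs1000 : 1000 ≤ s := by nlinarith
  have hts : t ≤ 1.16 * s := by nlinarith
  have hlog : log m ≤ t / 500 + 12 := by
    rw [← ht, log_pow]
    have := log_le_div_thousand_add_six ht0
    push_cast; linarith
  have hA := nine_tenths_lt_weightConst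
  have hgap : 9 / 10 * (m - 6 / 5 * n) ≤ weightConst * (m - 6 / 5 * n) :=
    mul_le_mul_of_nonneg_right hA.le (by linarith)
  have := mul_le_mul_of_nonneg_left hlog (by linarith : 0 ≤ 2 * t)
  nlinarith

theorem exists_prime_lt_and_three_mul_add_thirty_le_four_mul {n : ℕ} (hn : 10 ^ 6 ≤ n) :
    ∃ p, p.Prime ∧ n < p ∧ 3 * p + 30 ≤ 4 * n := by
  set m := (4 * n - 30) / 3
  by_contra! h
  have hθ : θ m = θ n := theta_eq_of_forall_not_prime (by omega) fun p hnp hpm hp => by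
    have := h p hp hnp; omega
  have hm1 : (1 : ℝ) ≤ m := by exact_mod_cast (by omega : 1 ≤ m)
  have h₁ := (abs_le.mp (abs_log_weightNum_sub_log_weightDen_sub_le (by omega : 30 ≤ m))).1
  have h₂ := log_weightNum_sub_log_weightDen_le_psi m
  have h₃ := psi_sub_theta_le hm1
  have h₄ := theta_le_psi n
  have h₅ := psi_le_six_fifths_mul_weightConst n
  have := six_fifths_mul_add_lt_weightConst_mul_sub (m := m) hn (by omega) (by omega)
  linarith

end Chebyshev

def PrimeInWindow (x : ℝ) : Prop := ∃ p : ℕ, p.Prime ∧ 3 * x / 4 < p ∧ (p : ℝ) < x - 8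

lemma forall_primeInWindow_of_prime {a : ℝ} {q : ℕ} (hq : q.Prime) (hqa : q + 8 < a)
    (H : ∀ x : ℝ, 45 < x → x < a → PrimeInWindow x) (x : ℝ) (hx : 45 < x) (hxq : x < 4 * q / 3) :
    PrimeInWindow x := by
  rcases lt_or_ge x a with hxa | hax
  · exact H x hx hxa
  · exact ⟨q, hq, by linarith, by linarith⟩

lemma forall_primeInWindow_of_isChain {q : ℕ} {l : List ℕ}
    (H : ∀ x : ℝ, 45 < x → x < 4 * q / 3 → PrimeInWindow x)
    (hchain : (q :: l).IsChain fun a b => 3 * b + 24 < 4 * a) (hl : ∀ p ∈ l, p.Prime) :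
    ∀ r ∈ l, ∀ x : ℝ, 45 < x → x < 4 * r / 3 → PrimeInWindow x := by
  induction l generalizing q with
  | nil => simp
  | cons r l ih =>
    rw [List.isChain_cons_cons] at hchain
    have hr : ∀ x : ℝ, 45 < x → x < 4 * r / 3 → PrimeInWindow x :=
      forall_primeInWindow_of_prime (hl r List.mem_cons_self)
        (by have : (3 * r + 24 : ℝ) < 4 * q := by exact_mod_cast hchain.1
            linarith) H
    intro s hs
    rcases List.mem_cons.mp hs with rfl | hs
    · exact hr
    · exact ih hr hchain.2 (fun p hp => hl p (List.mem_cons_of_mem r hp)) s hs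

def windowPrimes : List ℕ :=
  [41, 43, 47, 53, 61, 73, 89, 109, 137, 173, 211, 271, 353, 461, 601, 787, 1039, 1373, 1811,
    2399, 3187, 4241, 5641, 7507, 9973, 13267, 17681, 23563, 31397, 41851, 55793, 74381, 99149,
    132173, 176221, 234947, 313249, 417649, 556849, 742457, 989929, 1319893]

/-- For every real `x > 45`, the interval `(3x/4, x - 8)` contains a prime. -/
theorem exists_prime_between_three_quarters (x : ℝ) (hx : 45 < x) :
    ∃ p : ℕ, p.Prime ∧ 3 * x / 4 < (p : ℝ) ∧ (p : ℝ) < x - 8 := by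
  rcases lt_or_ge x (4 * 1319893 / 3) with hsmall | hlarge
  · have hbase : ∀ x : ℝ, 45 < x → x < 4 * (37 : ℕ) / 3 → PrimeInWindow x := fun x h₁ h₂ =>
      ⟨37, by norm_num, by push_cast at h₂ ⊢; linarith, by push_cast; linarith⟩
    exact forall_primeInWindow_of_isChain (l := windowPrimes) hbase (by decide)
      (by norm_num [windowPrimes]) 1319893 (by decide) x hx (by exact_mod_cast hsmall)
  set n := ⌊3 * x / 4⌋₊
  have hn : 10 ^ 6 ≤ n := Nat.le_floor (by push_cast; linarith)
  obtain ⟨p, hp, hnp, hpn⟩ := Chebyshev.exists_prime_lt_and_three_mul_add_thirty_le_four_mul hn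
  have hnx : (n : ℝ) ≤ 3 * x / 4 := Nat.floor_le (by linarith)
  have hxn : 3 * x / 4 < n + 1 := Nat.lt_floor_add_one _
  have hnp' : (n : ℝ) + 1 ≤ p := by exact_mod_cast hnp
  have hpn' : 3 * (p : ℝ) + 30 ≤ 4 * n := by exact_mod_cast hpn
  exact ⟨p, hp, by linarith, by linarith⟩
end

section
/- For every real number x > 27, the open interval (x/2, x − 8) contains at least two distinct prime numbers. -/
/-!
Erdős's proof of Bertrand's postulate, with room for ten large primes. The prime factors of
`centralBinom n` below `√(2n)` contribute at most `(2n)^√(2n)`, those in `(√(2n), 2n/3]`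
appear at most once and contribute at most `4^(2n/3)` in total, none lie in `(2n/3, n]`, and
each one in `(n, 2n]` contributes at most `2n`. If `(n, 2n - 9]` holds at most one prime, then
`(n, 2n]` holds at most ten, so `4^n < n · centralBinom n ≤ n (2n)^(√(2n) + 10) 4^(2n/3)`,
which fails for `n ≥ 2048`: the logarithm of the ratio of the two sides is concave, positive
at `18` and negative at `2048`. For `14 ≤ n < 2048` a chain of prime pairs does the job, and
`n = ⌊x/2⌋` gives the theorem.
-/

open Finset

theorem ConcaveOn.comp_const_mul {s : Set ℝ} {g : ℝ → ℝ} (hg : ConcaveOn ℝ s g)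
    (c : ℝ) : ConcaveOn ℝ ((c * ·) ⁻¹' s) fun x => g (c * x) :=
  hg.comp_linearMap (c • LinearMap.id)

theorem Finset.card_filter_Ioc_le_add (P : ℕ → Prop) [DecidablePred P] (a b c : ℕ) :
    #{x ∈ Ioc a c | P x} ≤ #{x ∈ Ioc a b | P x} + (c - b) := by
  have hsub : Ioc a c ⊆ Ioc a b ∪ Ioc b c := fun x hx => by
    simp only [mem_union, mem_Ioc] at hx ⊢
    omega
  calc #{x ∈ Ioc a c | P x}
      ≤ #{x ∈ Ioc a b ∪ Ioc b c | P x} := card_le_card (filter_subset_filter _ hsub)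
    _ ≤ #{x ∈ Ioc a b | P x} + #{x ∈ Ioc b c | P x} := by
        rw [filter_union]; exact card_union_le _ _
    _ ≤ #{x ∈ Ioc a b | P x} + (c - b) := by
        gcongr
        exact (card_filter_le _ _).trans (Nat.card_Ioc b c).le

namespace Nat

theorem prod_pow_factorization_centralBinom_range_le {n : ℕ} (hn : 0 < n) :
    ∏ p ∈ range (2 * n / 3 + 1), p ^ (centralBinom n).factorization p ≤
      (2 * n) ^ sqrt (2 * n) * 4 ^ (2 * n / 3) := by
  set f : ℕ → ℕ := fun p => p ^ (centralBinom n).factorization p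
  have h2n : 0 < 2 * n := by omega
  let S := {p ∈ range (2 * n / 3 + 1) | p.Prime}
  have hS : ∏ p ∈ S, f p = ∏ p ∈ range (2 * n / 3 + 1), f p := by
    refine prod_filter_of_ne fun p _ h => ?_
    contrapose h
    simp only [f, factorization_eq_zero_of_not_prime _ h, pow_zero]
  rw [← hS, ← prod_filter_mul_prod_filter_not S (· ≤ sqrt (2 * n))]
  gcongr ?_ * ?_
  · refine (prod_le_pow_card _ _ _ fun p _ => pow_factorization_choose_le h2n).trans ?_
    refine pow_right_mono₀ h2n ((card_le_card fun p hp => ?_).trans (card_Icc 1 _).le)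
    simp only [S, mem_filter, mem_range] at hp
    exact mem_Icc.2 ⟨hp.1.2.one_lt.le, hp.2⟩
  · refine le_trans ?_ (primorial_le_four_pow (2 * n / 3))
    refine (prod_le_prod' fun p hp => (?_ : f p ≤ p)).trans ?_
    · simp only [S, mem_filter, not_le] at hp
      exact (pow_le_pow_right₀ hp.1.2.one_lt.le
        (factorization_choose_le_one (sqrt_lt'.1 hp.2))).trans (pow_one p).le
    exact prod_le_prod_of_subset_of_one_le' (filter_subset _ _)
      fun p hp _ => (mem_filter.1 hp).2.one_lt.le

theorem prod_pow_factorization_centralBinom_Ico_le {n : ℕ} (hn : 2 < n) :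
    ∏ p ∈ Ico (2 * n / 3 + 1) (2 * n + 1), p ^ (centralBinom n).factorization p ≤
      (2 * n) ^ #{p ∈ Ioc n (2 * n) | p.Prime} := by
  have hsub : {p ∈ Ioc n (2 * n) | p.Prime} ⊆ Ico (2 * n / 3 + 1) (2 * n + 1) := fun p hp => by
    simp only [mem_filter, mem_Ioc, mem_Ico] at hp ⊢
    omega
  rw [← prod_subset hsub fun p hp hpT => ?_]
  · exact prod_le_pow_card _ _ _ fun p _ => pow_factorization_choose_le (by omega)
  simp only [mem_filter, mem_Ioc, mem_Ico, not_and] at hp hpT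
  by_cases hprime : p.Prime
  · rw [factorization_centralBinom_of_two_mul_self_lt_three_mul hn (by grind) (by omega),
      pow_zero]
  · rw [factorization_eq_zero_of_not_prime _ hprime, pow_zero]

theorem centralBinom_le_mul_pow_card_primes {n : ℕ} (hn : 2 < n) :
    centralBinom n ≤ (2 * n) ^ sqrt (2 * n) * 4 ^ (2 * n / 3) *
      (2 * n) ^ #{p ∈ Ioc n (2 * n) | p.Prime} := by
  rw [← prod_pow_factorization_centralBinom,
    ← prod_range_mul_prod_Ico _ (by omega : 2 * n / 3 + 1 ≤ 2 * n + 1)]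
  exact mul_le_mul' (prod_pow_factorization_centralBinom_range_le (by omega))
    (prod_pow_factorization_centralBinom_Ico_le hn)

end Nat

namespace TwoPrimesBetweenHalf

section Real

open Real

/-- The logarithm of `x (2x)^(√(2x) + 10) / 4^(x/3)`. -/
noncomputable def logExcess (x : ℝ) : ℝ :=
  log x + (√(2 * x) + 10) * log (2 * x) - log 4 / 3 * x

theorem concaveOn_logExcess : ConcaveOn ℝ (Set.Ioi (1 / 2)) logExcess := by
  have h2x : Set.Ioi (1 / 2 : ℝ) ⊆ (2 * ·) ⁻¹' Set.Ioi 1 := fun x hx => by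
    simp only [Set.mem_preimage, Set.mem_Ioi] at hx ⊢; linarith
  have hlog : ConcaveOn ℝ (Set.Ioi (1 / 2)) log :=
    strictConcaveOn_log_Ioi.concaveOn.subset (Set.Ioi_subset_Ioi (by norm_num)) (convex_Ioi _)
  have hsqrt : ConcaveOn ℝ (Set.Ioi (1 / 2)) fun x => √(2 * x) * log (2 * x) :=
    (strictConcaveOn_sqrt_mul_log_Ioi.concaveOn.comp_const_mul 2).subset h2x (convex_Ioi _)
  have hlog2 : ConcaveOn ℝ (Set.Ioi (1 / 2)) fun x => log (2 * x) :=
    (strictConcaveOn_log_Ioi.concaveOn.comp_const_mul 2).subset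
      (h2x.trans (Set.preimage_mono (Set.Ioi_subset_Ioi zero_le_one))) (convex_Ioi _)
  have hlin : ConvexOn ℝ (Set.Ioi (1 / 2)) fun x => log 4 / 3 * x :=
    (convexOn_id (convex_Ioi _)).smul (by positivity)
  refine ((hlog.add (hsqrt.add (hlog2.smul (by norm_num : (0 : ℝ) ≤ 10)))).sub hlin).congr
    fun x _ => ?_
  simp only [logExcess, Pi.add_apply, Pi.sub_apply, smul_eq_mul]
  ring

theorem logExcess_eighteen_nonneg : 0 ≤ logExcess 18 := by
  have hsqrt : √(2 * 18 : ℝ) = 6 := by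
    rw [show (2 * 18 : ℝ) = 6 ^ 2 by norm_num, sqrt_sq (by norm_num)]
  have h4 : log 4 ≤ log (2 * 18) := log_le_log (by norm_num) (by norm_num)
  have h18 : 0 ≤ log 18 := log_nonneg (by norm_num)
  have hpos : 0 ≤ log 4 := log_nonneg (by norm_num)
  rw [logExcess, hsqrt]
  norm_num at h4 ⊢
  linarith

theorem logExcess_2048_nonpos : logExcess 2048 ≤ 0 := by
  have hsqrt : √(2 * 2048 : ℝ) = 64 := by
    rw [show (2 * 2048 : ℝ) = 64 ^ 2 by norm_num, sqrt_sq (by norm_num)]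
  have h2048 : log 2048 = 11 * log 2 := by
    rw [show (2048 : ℝ) = 2 ^ 11 by norm_num, log_pow]; norm_num
  have h4096 : log (2 * 2048) = 12 * log 2 := by
    rw [show (2 * 2048 : ℝ) = 2 ^ 12 by norm_num, log_pow]; norm_num
  have h4 : log 4 = 2 * log 2 := by
    rw [show (4 : ℝ) = 2 ^ 2 by norm_num, log_pow]; norm_num
  rw [logExcess, hsqrt, h2048, h4096, h4]
  nlinarith [log_pos one_lt_two]

theorem logExcess_nonpos {x : ℝ} (hx : 2048 ≤ x) : logExcess x ≤ 0 :=
  (concaveOn_logExcess.right_le_of_le_left'' (by norm_num) (Set.mem_Ioi.2 (by linarith))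
    (by norm_num) hx (logExcess_2048_nonpos.trans logExcess_eighteen_nonneg)).trans
    logExcess_2048_nonpos

theorem real_main_inequality {x : ℝ} (hx : 2048 ≤ x) :
    x * (2 * x) ^ (√(2 * x) + 10) * 4 ^ (2 * x / 3) ≤ 4 ^ x := by
  have hlog := logExcess_nonpos hx
  rw [logExcess] at hlog
  rw [← log_le_log_iff (by positivity) (by positivity), log_mul (by positivity) (by positivity),
    log_mul (by positivity) (by positivity), log_rpow (by positivity), log_rpow (by positivity),
    log_rpow (by positivity)]
  linarith

end Real

theorem main_inequality {n : ℕ} (hn : 2048 ≤ n) :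
    n * (2 * n) ^ (Nat.sqrt (2 * n) + 10) * 4 ^ (2 * n / 3) ≤ 4 ^ n := by
  rw [← @Nat.cast_le ℝ]
  simp only [Nat.cast_add, Nat.cast_mul, Nat.cast_pow, ← Real.rpow_natCast, Nat.cast_ofNat]
  refine le_trans ?_ (real_main_inequality (by exact_mod_cast hn))
  gcongr
  · exact_mod_cast (by omega : 0 < 2 * n)
  · exact_mod_cast Real.nat_sqrt_le_real_sqrt
  · norm_num
  · exact Nat.cast_div_le.trans (by norm_cast)

theorem one_lt_card_primes_Ioc_of_2048_le {n : ℕ} (hn : 2048 ≤ n) :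
    1 < #{p ∈ Ioc n (2 * n - 9) | p.Prime} := by
  by_contra! h
  have hcard : #{p ∈ Ioc n (2 * n) | p.Prime} ≤ 10 :=
    (card_filter_Ioc_le_add _ n (2 * n - 9) (2 * n)).trans (by omega)
  have hcentralBinom : n * n.centralBinom ≤ 4 ^ n := calc
    n * n.centralBinom
      ≤ n * ((2 * n) ^ Nat.sqrt (2 * n) * 4 ^ (2 * n / 3) * (2 * n) ^ 10) := by
        grw [Nat.centralBinom_le_mul_pow_card_primes (by omega), hcard]
        omega
    _ = n * (2 * n) ^ (Nat.sqrt (2 * n) + 10) * 4 ^ (2 * n / 3) := by ring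
    _ ≤ 4 ^ n := main_inequality hn
  exact (Nat.four_pow_lt_mul_centralBinom n (by omega)).not_ge hcentralBinom

theorem one_lt_card_primes_Ioc_of_prime_pair {n : ℕ} (q r : ℕ) {p : ℕ}
    (hpair : p.Prime ∧ r.Prime ∧ p < r ∧ r + 9 ≤ 2 * q)
    (H : n < q → 1 < #{p ∈ Ioc n (2 * n - 9) | p.Prime}) (hn : n < p) :
    1 < #{p ∈ Ioc n (2 * n - 9) | p.Prime} := by
  obtain ⟨hp, hr, hpr, hrq⟩ := hpair
  by_cases hrn : r + 9 ≤ 2 * n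
  · exact one_lt_card.2 ⟨p, mem_filter.2 ⟨mem_Ioc.2 ⟨hn, by omega⟩, hp⟩,
      r, mem_filter.2 ⟨mem_Ioc.2 ⟨by omega, by omega⟩, hr⟩, hpr.ne⟩
  · exact H (by omega)

theorem one_lt_card_primes_Ioc {n : ℕ} (hn : 14 ≤ n) :
    1 < #{p ∈ Ioc n (2 * n - 9) | p.Prime} := by
  rcases le_or_gt 2048 n with h | h
  · exact one_lt_card_primes_Ioc_of_2048_le h
  replace h : n < 3881 := by omega
  revert h
  refine one_lt_card_primes_Ioc_of_prime_pair 1951 3889 (by norm_num) ?_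
  refine one_lt_card_primes_Ioc_of_prime_pair 991 1973 (by norm_num) ?_
  refine one_lt_card_primes_Ioc_of_prime_pair 503 997 (by norm_num) ?_
  refine one_lt_card_primes_Ioc_of_prime_pair 263 509 (by norm_num) ?_
  refine one_lt_card_primes_Ioc_of_prime_pair 139 269 (by norm_num) ?_
  refine one_lt_card_primes_Ioc_of_prime_pair 79 149 (by norm_num) ?_
  refine one_lt_card_primes_Ioc_of_prime_pair 47 83 (by norm_num) ?_
  refine one_lt_card_primes_Ioc_of_prime_pair 31 53 (by norm_num) ?_
  refine one_lt_card_primes_Ioc_of_prime_pair 23 37 (by norm_num) ?_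
  refine one_lt_card_primes_Ioc_of_prime_pair 19 29 (by norm_num) ?_
  refine one_lt_card_primes_Ioc_of_prime_pair 17 23 (by norm_num) ?_
  refine one_lt_card_primes_Ioc_of_prime_pair 14 19 (by norm_num) ?_
  omega

theorem half_lt_and_lt_sub_of_mem_Ioc_floor {x : ℝ} (hx : 0 ≤ x) {m : ℕ}
    (hm : m ∈ Ioc ⌊x / 2⌋₊ (2 * ⌊x / 2⌋₊ - 9)) : x / 2 < m ∧ (m : ℝ) < x - 8 := by
  rw [mem_Ioc] at hm
  have hfloor_le : (⌊x / 2⌋₊ : ℝ) ≤ x / 2 := Nat.floor_le (by linarith)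
  have hlt_floor : x / 2 < ⌊x / 2⌋₊ + 1 := Nat.lt_floor_add_one _
  have hm_ge : (⌊x / 2⌋₊ : ℝ) + 1 ≤ m := by exact_mod_cast hm.1
  have hm_le : (m : ℝ) + 9 ≤ 2 * ⌊x / 2⌋₊ := by
    exact_mod_cast (by omega : m + 9 ≤ 2 * ⌊x / 2⌋₊)
  constructor <;> linarith

end TwoPrimesBetweenHalf

open TwoPrimesBetweenHalf in
/-- For every real `x > 27`, the interval `(x/2, x - 8)` contains at least two primes. -/
theorem exists_two_primes_between_half (x : ℝ) (hx : 27 < x) :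
    ∃ p r : ℕ, p.Prime ∧ r.Prime ∧ p ≠ r ∧
      x / 2 < (p : ℝ) ∧ (p : ℝ) < x - 8 ∧ x / 2 < (r : ℝ) ∧ (r : ℝ) < x - 8 := by
  rcases lt_or_ge x 28 with hx28 | hx28
  · refine ⟨17, 19, by norm_num, by norm_num, by norm_num, ?_, ?_, ?_, ?_⟩ <;>
      push_cast <;> linarith
  have hn : 14 ≤ ⌊x / 2⌋₊ := Nat.le_floor (by push_cast; linarith)
  obtain ⟨p, hp, r, hr, hpr⟩ := one_lt_card.1 (one_lt_card_primes_Ioc hn)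
  rw [mem_filter] at hp hr
  obtain ⟨hp_gt, hp_lt⟩ := half_lt_and_lt_sub_of_mem_Ioc_floor (by linarith) hp.1
  obtain ⟨hr_gt, hr_lt⟩ := half_lt_and_lt_sub_of_mem_Ioc_floor (by linarith) hr.1
  exact ⟨p, r, hp.2, hr.2, hpr, hp_gt, hp_lt, hr_gt, hr_lt⟩
end

section
/- For every natural number n ≥ 5 there exist k ≥ 1 and positive integers n₁, …, n_k with n = n₁ + … + n_k, such that n₁, …, n_k are pairwise coprime (gcd(nᵢ, n_j) = 1 for i ≠ j), at most one of them equals 1, and the following holds: for every 1 ≤ j ≤ n there exist k' ≤ k, positive integers j₁, …, j_{k'} with j = j₁ + … + j_{k'}, and an injective map η from {1, …, k'} to {1, …, k} such that for every i: (a) jᵢ ≤ n_{η(i)}, and (b) if n_{η(i)} > 1 then gcd(jᵢ, n_{η(i)}) > 1. -/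
lemma two_le_gcd' {a b : ℕ} (ha : 2 ∣ a) (hb : 2 ∣ b) (hpos : 0 < a) :
    1 < Nat.gcd a b := by
  have h := Nat.dvd_gcd ha hb
  have := Nat.gcd_pos_of_pos_left b hpos
  omega

lemma pair3_gcd (x y : ℕ) (hcop : Nat.gcd x y = 1) :
    ∀ i j : Fin 3, i ≠ j → Nat.gcd ((![1, x, y]) i) ((![1, x, y]) j) = 1 := by
  intro i j hij
  fin_cases i <;> fin_cases j <;> simp_all
  rw [Nat.gcd_comm]; exact hcop

lemma pair3_one (x y : ℕ) (hx : 2 ≤ x) (hy : 2 ≤ y) :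
    ∀ i j : Fin 3, i ≠ j → ¬ ((![1, x, y]) i = 1 ∧ (![1, x, y]) j = 1) := by
  intro i j hij
  fin_cases i <;> fin_cases j <;> simp_all <;> omega

lemma pair2_gcd (x : ℕ) :
    ∀ i j : Fin 2, i ≠ j → Nat.gcd ((![1, x]) i) ((![1, x]) j) = 1 := by
  intro i j hij
  fin_cases i <;> fin_cases j <;> simp_all

lemma pair2_one (x : ℕ) (hx : 2 ≤ x) :
    ∀ i j : Fin 2, i ≠ j → ¬ ((![1, x]) i = 1 ∧ (![1, x]) j = 1) := by
  intro i j hij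
  fin_cases i <;> fin_cases j <;> simp_all <;> omega

/-- For every `n ≥ 5` there is a decomposition `n = n₁ + ⋯ + n_k` into pairwise coprime
positive integers, at most one of which equals `1`, such that every `1 ≤ j ≤ n` admits a
decomposition `j = j₁ + ⋯ + j_{k'}` with an injection `η` into the components of `n`
satisfying `jᵢ ≤ n_{η(i)}` and `gcd(jᵢ, n_{η(i)}) > 1` whenever `n_{η(i)} > 1`. -/
theorem exists_coprime_decomposition (n : ℕ) (hn : 5 ≤ n) :
    ∃ (k : ℕ) (ns : Fin k → ℕ), 1 ≤ k ∧ (∀ i, 0 < ns i) ∧ (∑ i, ns i) = n ∧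
      (∀ i j, i ≠ j → Nat.gcd (ns i) (ns j) = 1) ∧
      (∀ i j, i ≠ j → ¬ (ns i = 1 ∧ ns j = 1)) ∧
      ∀ j : ℕ, 1 ≤ j → j ≤ n →
        ∃ (k' : ℕ) (js : Fin k' → ℕ) (η : Fin k' → Fin k),
          k' ≤ k ∧ Function.Injective η ∧ (∀ i, 0 < js i) ∧ (∑ i, js i) = j ∧
          ∀ i, js i ≤ ns (η i) ∧ (1 < ns (η i) → 1 < Nat.gcd (js i) (ns (η i))) := by
  rcases Nat.even_or_odd n with hpar | hpar
  · -- n even: components 1, 2^a, m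
    obtain ⟨c, hc⟩ := hpar
    set a := Nat.log 2 (n - 4) with ha
    have h1 : 2 ^ a ≤ n - 4 := Nat.pow_log_le_self 2 (by omega)
    have h2 : n - 4 < 2 ^ (a + 1) := Nat.lt_pow_succ_log_self (by norm_num) _
    have hpow : 2 ^ (a + 1) = 2 ^ a + 2 ^ a := by ring
    have ha1 : 1 ≤ a := Nat.log_pos (by norm_num) (by omega)
    have hae : 2 ∣ 2 ^ a := dvd_pow_self 2 (by omega)
    set m := n - 1 - 2 ^ a with hm
    have hm3 : 3 ≤ m := by omega
    have hmle : m ≤ 2 ^ a + 2 := by omega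
    have hcop : Nat.gcd (2 ^ a) m = 1 := by
      have : Nat.Coprime 2 m := Nat.coprime_two_left.mpr (Nat.odd_iff.mpr (by omega))
      exact this.pow_left a
    have hgmm : 1 < Nat.gcd m m := by rw [Nat.gcd_self]; omega
    refine ⟨3, ![1, 2 ^ a, m], by norm_num, ?_, ?_, pair3_gcd _ _ hcop,
      pair3_one _ _ (by omega) (by omega), ?_⟩
    · intro i; fin_cases i
      · show 0 < 1; omega
      · show 0 < 2 ^ a; omega
      · show 0 < m; omega
    · show 1 + (2 ^ a + (m + 0)) = n; omega
    · intro j hj1 hjn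
      by_cases hsmall : j ≤ 2 ^ a + 1
      · rcases Nat.even_or_odd j with hje | hjo
        · -- j even, 2 ≤ j ≤ 2^a
          obtain ⟨d, hd⟩ := hje
          refine ⟨1, ![j], ![1], by norm_num, fun x y _ => Subsingleton.elim x y, ?_,
            by show j + 0 = j; omega, ?_⟩
          · intro i; fin_cases i; show 0 < j; omega
          · intro i; fin_cases i
            refine ⟨show j ≤ 2 ^ a by omega, fun _ => ?_⟩
            show 1 < Nat.gcd j (2 ^ a)
            exact two_le_gcd' (by omega) hae (by omega)
        · obtain ⟨d, hd⟩ := hjo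
          rcases Nat.eq_or_lt_of_le hj1 with h1' | h1'
          · -- j = 1
            refine ⟨1, ![1], ![0], by norm_num, fun x y _ => Subsingleton.elim x y, ?_,
              by show 1 + 0 = j; omega, ?_⟩
            · intro i; fin_cases i; show 0 < 1; omega
            · intro i; fin_cases i
              exact ⟨show (1:ℕ) ≤ 1 by omega, fun h => absurd h (by norm_num)⟩
          · -- j odd ≥ 3 : (1, j-1)
            refine ⟨2, ![1, j - 1], ![0, 1], by norm_num, by decide, ?_, ?_, ?_⟩
            · intro i; fin_cases i
              · show 0 < 1; omega
              · show 0 < j - 1; omega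
            · show 1 + (j - 1 + 0) = j; omega
            · intro i; fin_cases i
              · exact ⟨show (1:ℕ) ≤ 1 by omega, fun h => absurd h (by norm_num)⟩
              · refine ⟨show j - 1 ≤ 2 ^ a by omega, fun _ => ?_⟩
                show 1 < Nat.gcd (j - 1) (2 ^ a)
                exact two_le_gcd' (by omega) hae (by omega)
      · -- j ≥ 2^a + 2 ≥ m; r = j - m ∈ [0, 2^a+1]
        have hjm : m ≤ j := by omega
        set r := j - m with hr
        have hrle : r ≤ 2 ^ a + 1 := by omega
        rcases Nat.eq_zero_or_pos r with hr0 | hrpos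
        · refine ⟨1, ![m], ![2], by norm_num, fun x y _ => Subsingleton.elim x y, ?_,
            by show m + 0 = j; omega, ?_⟩
          · intro i; fin_cases i; show 0 < m; omega
          · intro i; fin_cases i
            exact ⟨show m ≤ m from le_rfl, fun _ => hgmm⟩
        · rcases Nat.even_or_odd r with hre | hro
          · -- r even ≥ 2: (r, m)
            obtain ⟨d, hd⟩ := hre
            refine ⟨2, ![r, m], ![1, 2], by norm_num, by decide, ?_, ?_, ?_⟩
            · intro i; fin_cases i
              · show 0 < r; omega
              · show 0 < m; omega
            · show r + (m + 0) = j; omega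
            · intro i; fin_cases i
              · refine ⟨show r ≤ 2 ^ a by omega, fun _ => ?_⟩
                show 1 < Nat.gcd r (2 ^ a)
                exact two_le_gcd' (by omega) hae (by omega)
              · exact ⟨show m ≤ m from le_rfl, fun _ => hgmm⟩
          · obtain ⟨d, hd⟩ := hro
            rcases Nat.eq_or_lt_of_le hrpos with h1' | h1'
            · -- r = 1 : (1, m)
              refine ⟨2, ![1, m], ![0, 2], by norm_num, by decide, ?_, ?_, ?_⟩
              · intro i; fin_cases i
                · show 0 < 1; omega
                · show 0 < m; omega
              · show 1 + (m + 0) = j; omega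
              · intro i; fin_cases i
                · exact ⟨show (1:ℕ) ≤ 1 by omega, fun h => absurd h (by norm_num)⟩
                · exact ⟨show m ≤ m from le_rfl, fun _ => hgmm⟩
            · -- r odd ≥ 3 : (1, r-1, m)
              refine ⟨3, ![1, r - 1, m], ![0, 1, 2], by norm_num, by decide, ?_, ?_, ?_⟩
              · intro i; fin_cases i
                · show 0 < 1; omega
                · show 0 < r - 1; omega
                · show 0 < m; omega
              · show 1 + (r - 1 + (m + 0)) = j; omega
              · intro i; fin_cases i
                · exact ⟨show (1:ℕ) ≤ 1 by omega, fun h => absurd h (by norm_num)⟩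
                · refine ⟨show r - 1 ≤ 2 ^ a by omega, fun _ => ?_⟩
                  show 1 < Nat.gcd (r - 1) (2 ^ a)
                  exact two_le_gcd' (by omega) hae (by omega)
                · exact ⟨show m ≤ m from le_rfl, fun _ => hgmm⟩
  · -- n odd: components 1, n-1
    obtain ⟨c, hc⟩ := hpar
    have hev : 2 ∣ n - 1 := by omega
    refine ⟨2, ![1, n - 1], by norm_num, ?_, ?_, pair2_gcd _, pair2_one _ (by omega), ?_⟩
    · intro i; fin_cases i
      · show 0 < 1; omega
      · show 0 < n - 1; omega
    · show 1 + (n - 1 + 0) = n; omega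
    · intro j hj1 hjn
      rcases Nat.even_or_odd j with hje | hjo
      · obtain ⟨d, hd⟩ := hje
        refine ⟨1, ![j], ![1], by norm_num, fun x y _ => Subsingleton.elim x y, ?_,
          by show j + 0 = j; omega, ?_⟩
        · intro i; fin_cases i; show 0 < j; omega
        · intro i; fin_cases i
          refine ⟨show j ≤ n - 1 by omega, fun _ => ?_⟩
          show 1 < Nat.gcd j (n - 1)
          exact two_le_gcd' (by omega) hev (by omega)
      · obtain ⟨d, hd⟩ := hjo
        rcases Nat.eq_or_lt_of_le hj1 with h1' | h1'
        · refine ⟨1, ![1], ![0], by norm_num, fun x y _ => Subsingleton.elim x y, ?_,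
            by show 1 + 0 = j; omega, ?_⟩
          · intro i; fin_cases i; show 0 < 1; omega
          · intro i; fin_cases i
            exact ⟨show (1:ℕ) ≤ 1 by omega, fun h => absurd h (by norm_num)⟩
        · refine ⟨2, ![1, j - 1], ![0, 1], by norm_num, by decide, ?_, ?_, ?_⟩
          · intro i; fin_cases i
            · show 0 < 1; omega
            · show 0 < j - 1; omega
          · show 1 + (j - 1 + 0) = j; omega
          · intro i; fin_cases i
            · exact ⟨show (1:ℕ) ≤ 1 by omega, fun h => absurd h (by norm_num)⟩
            · refine ⟨show j - 1 ≤ n - 1 by omega, fun _ => ?_⟩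
              show 1 < Nat.gcd (j - 1) (n - 1)
              exact two_le_gcd' (by omega) hev (by omega)
end

section
/- For every natural number n ≥ 5 and every 1 ≤ j ≤ n such that (n, j) is not one of (6,3), (8,3), (8,5), there exist k ≥ 1 and positive integers n₁, …, n_k with n = n₁ + … + n_k, pairwise coprime, each nᵢ distinct from 2 and 3, with at most one nᵢ equal to 1, together with k' ≤ k, positive integers j₁, …, j_{k'} with j = j₁ + … + j_{k'}, and an injective map η from {1, …, k'} to {1, …, k} such that for every i: (a) jᵢ ≤ n_{η(i)}; (b) if n_{η(i)} > 1 then gcd(jᵢ, n_{η(i)}) > 1; and (c) if n_{η(i)} = 6 then gcd(jᵢ, n_{η(i)}) ≠ 3. -/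
def Goal (n j : ℕ) : Prop :=
  ∃ (k : ℕ) (ns : Fin k → ℕ), 1 ≤ k ∧ (∀ i, 0 < ns i) ∧ (∑ i, ns i) = n ∧
    (∀ i, ns i ≠ 2 ∧ ns i ≠ 3) ∧
    (∀ i i', i ≠ i' → Nat.gcd (ns i) (ns i') = 1) ∧
    (∀ i i', i ≠ i' → ¬ (ns i = 1 ∧ ns i' = 1)) ∧
    ∃ (k' : ℕ) (js : Fin k' → ℕ) (η : Fin k' → Fin k),
      k' ≤ k ∧ Function.Injective η ∧ (∀ i, 0 < js i) ∧ (∑ i, js i) = j ∧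
      ∀ i, js i ≤ ns (η i) ∧ (1 < ns (η i) → 1 < Nat.gcd (js i) (ns (η i))) ∧
        (ns (η i) = 6 → Nat.gcd (js i) (ns (η i)) ≠ 3)

-- k = 1 : single block n, single j
lemma H1 (n j : ℕ) (h2 : n ≠ 2) (h3 : n ≠ 3) (hj : 0 < j) (hjn : j ≤ n)
    (hg : 1 < Nat.gcd j n) (h6 : n = 6 → Nat.gcd j n ≠ 3) : Goal n j := by
  refine ⟨1, ![n], le_refl _, ?_, ?_, ?_, ?_, ?_, 1, ![j], ![0], le_refl _,
    Function.injective_of_subsingleton _, ?_, ?_, ?_⟩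
  · intro i; fin_cases i <;> simp <;> omega
  · simp
  · intro i; fin_cases i <;> simp [h2, h3]
  · intro i i' h; exact absurd (Subsingleton.elim i i') h
  · intro i i' h; exact absurd (Subsingleton.elim i i') h
  · intro i; fin_cases i <;> simpa
  · simp
  · intro i; fin_cases i <;> simp_all

-- k = 2 : blocks [a, b], all of j on block a
lemma H4 (n j a b : ℕ) (hn : a + b = n) (hj : j ≤ a)
    (ha1 : 1 < a) (ha2 : a ≠ 2) (ha3 : a ≠ 3) (hb : 0 < b) (hb2 : b ≠ 2) (hb3 : b ≠ 3)
    (hab : Nat.gcd a b = 1) (hjpos : 0 < j)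
    (hg : 1 < Nat.gcd j a) (h6 : a = 6 → Nat.gcd j a ≠ 3) : Goal n j := by
  subst hn
  refine ⟨2, ![a, b], by norm_num, ?_, ?_, ?_, ?_, ?_, 1, ![j], ![0], by norm_num,
    Function.injective_of_subsingleton _, ?_, ?_, ?_⟩
  · intro i; fin_cases i <;> simp <;> omega
  · simp [Fin.sum_univ_two]
  · intro i; fin_cases i <;> simp_all
  · intro i i' h; fin_cases i <;> fin_cases i' <;> simp_all [Nat.gcd_comm]
  · intro i i' h; fin_cases i <;> fin_cases i' <;> simp_all <;> omega
  · intro i; fin_cases i <;> simpa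
  · simp
  · intro i; fin_cases i <;> simp_all <;> omega

-- k = 2 : blocks [a, 1], j = 1 placed on the 1
lemma H2' (n a : ℕ) (hn : a + 1 = n) (ha1 : 1 < a) (ha2 : a ≠ 2) (ha3 : a ≠ 3) : Goal n 1 := by
  subst hn
  refine ⟨2, ![a, 1], by norm_num, ?_, ?_, ?_, ?_, ?_, 1, ![1], ![1], by norm_num,
    Function.injective_of_subsingleton _, ?_, ?_, ?_⟩
  · intro i; fin_cases i <;> simp <;> omega
  · simp [Fin.sum_univ_two]
  · intro i; fin_cases i <;> simp_all
  · intro i i' h; fin_cases i <;> fin_cases i' <;> simp_all [Nat.gcd_comm]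
  · intro i i' h; fin_cases i <;> fin_cases i' <;> simp_all <;> omega
  · intro i; fin_cases i <;> simp
  · simp
  · intro i; fin_cases i <;> simp_all

-- k = 2 : blocks [a, 1], js = [b, 1]
lemma H3 (n j a b : ℕ) (hn : a + 1 = n) (hj : b + 1 = j) (hb : 0 < b) (hba : b ≤ a)
    (ha1 : 1 < a) (ha2 : a ≠ 2) (ha3 : a ≠ 3)
    (hg : 1 < Nat.gcd b a) (h6 : a = 6 → Nat.gcd b a ≠ 3) : Goal n j := by
  subst hn; subst hj
  refine ⟨2, ![a, 1], by norm_num, ?_, ?_, ?_, ?_, ?_, 2, ![b, 1], ![0, 1], by norm_num,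
    ?_, ?_, ?_, ?_⟩
  · intro i; fin_cases i <;> simp <;> omega
  · simp [Fin.sum_univ_two]
  · intro i; fin_cases i <;> simp_all
  · intro i i' h; fin_cases i <;> fin_cases i' <;> simp_all [Nat.gcd_comm]
  · intro i i' h; fin_cases i <;> fin_cases i' <;> simp_all <;> omega
  · intro x y hxy; fin_cases x <;> fin_cases y <;> simp_all
  · intro i; fin_cases i <;> simp_all
  · simp [Fin.sum_univ_two]
  · intro i; fin_cases i <;> simp_all

-- k = 3 : blocks [a, 4, 1], j = 3 = 2 + 1
lemma H5 (n a : ℕ) (hn : a + 5 = n) (ha : 4 < a) (hodd : a % 2 = 1) : Goal n 3 := by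
  subst hn
  have hg4 : Nat.gcd a 4 = 1 := by
    have : Nat.Coprime a 2 := Nat.coprime_two_right.mpr (Nat.odd_iff.mpr hodd)
    have h4 : (4 : ℕ) = 2 ^ 2 := by norm_num
    rw [h4]; exact Nat.Coprime.pow_right _ this
  refine ⟨3, ![a, 4, 1], by norm_num, ?_, ?_, ?_, ?_, ?_, 2, ![2, 1], ![1, 2], by norm_num,
    ?_, ?_, ?_, ?_⟩
  · intro i; fin_cases i <;> simp <;> omega
  · simp [Fin.sum_univ_three]
  · intro i; fin_cases i <;> simp_all <;> omega
  · intro i i' h; fin_cases i <;> fin_cases i' <;> simp_all [Nat.gcd_comm]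
  · intro i i' h; fin_cases i <;> fin_cases i' <;> simp_all <;> omega
  · intro x y hxy; fin_cases x <;> fin_cases y <;> simp_all
  · intro i; fin_cases i <;> simp
  · simp [Fin.sum_univ_two]
  · intro i; fin_cases i <;> simp_all

-- k = 2 : blocks [a, b], js = [c, d], identity matching
lemma H6 (n j a b c d : ℕ) (hn : a + b = n) (hj : c + d = j)
    (hc : 0 < c) (hd : 0 < d) (hca : c ≤ a) (hdb : d ≤ b)
    (ha1 : 1 < a) (hb1 : 1 < b) (ha2 : a ≠ 2) (ha3 : a ≠ 3) (hb2 : b ≠ 2) (hb3 : b ≠ 3)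
    (hab : Nat.gcd a b = 1)
    (hgc : 1 < Nat.gcd c a) (hgd : 1 < Nat.gcd d b)
    (h6a : a = 6 → Nat.gcd c a ≠ 3) (h6b : b = 6 → Nat.gcd d b ≠ 3) : Goal n j := by
  subst hn; subst hj
  refine ⟨2, ![a, b], by norm_num, ?_, ?_, ?_, ?_, ?_, 2, ![c, d], ![0, 1], by norm_num,
    ?_, ?_, ?_, ?_⟩
  · intro i; fin_cases i <;> simp <;> omega
  · simp [Fin.sum_univ_two]
  · intro i; fin_cases i <;> simp_all
  · intro i i' h; fin_cases i <;> fin_cases i' <;> simp_all [Nat.gcd_comm]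
  · intro i i' h; fin_cases i <;> fin_cases i' <;> simp_all <;> omega
  · intro x y hxy; fin_cases x <;> fin_cases y <;> simp_all
  · intro i; fin_cases i <;> simp_all
  · simp [Fin.sum_univ_two]
  · intro i; fin_cases i <;> simp_all

lemma gcd_two (a b : ℕ) (ha : 2 ∣ a) (hb : 2 ∣ b) (hbpos : 0 < b) :
    1 < Nat.gcd a b ∧ Nat.gcd a b ≠ 3 := by
  have h := Nat.dvd_gcd ha hb
  have hpos : 0 < Nat.gcd a b := Nat.gcd_pos_of_pos_right _ hbpos
  omega


/-- For every `n ≥ 5` and `1 ≤ j ≤ n` with `(n,j) ∉ {(6,3), (8,3), (8,5)}`, there are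
decompositions `n = n₁ + ⋯ + n_k` into pairwise coprime positive integers distinct from
`2` and `3` (at most one equal to `1`) and `j = j₁ + ⋯ + j_{k'}`, with an injection `η`
satisfying `jᵢ ≤ n_{η(i)}`, `gcd(jᵢ, n_{η(i)}) > 1` whenever `n_{η(i)} > 1`, and
`gcd(jᵢ, n_{η(i)}) ≠ 3` whenever `n_{η(i)} = 6`. -/
theorem exists_coprime_decomposition_avoiding (n j : ℕ) (hn : 5 ≤ n)
    (hj1 : 1 ≤ j) (hjn : j ≤ n)
    (hexc : ¬ ((n = 6 ∧ j = 3) ∨ (n = 8 ∧ j = 3) ∨ (n = 8 ∧ j = 5))) :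
    ∃ (k : ℕ) (ns : Fin k → ℕ), 1 ≤ k ∧ (∀ i, 0 < ns i) ∧ (∑ i, ns i) = n ∧
      (∀ i, ns i ≠ 2 ∧ ns i ≠ 3) ∧
      (∀ i i', i ≠ i' → Nat.gcd (ns i) (ns i') = 1) ∧
      (∀ i i', i ≠ i' → ¬ (ns i = 1 ∧ ns i' = 1)) ∧
      ∃ (k' : ℕ) (js : Fin k' → ℕ) (η : Fin k' → Fin k),
        k' ≤ k ∧ Function.Injective η ∧ (∀ i, 0 < js i) ∧ (∑ i, js i) = j ∧
        ∀ i, js i ≤ ns (η i) ∧ (1 < ns (η i) → 1 < Nat.gcd (js i) (ns (η i))) ∧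
          (ns (η i) = 6 → Nat.gcd (js i) (ns (η i)) ≠ 3) := by
  show Goal n j
  by_cases hg : 1 < Nat.gcd j n
  · refine H1 n j (by omega) (by omega) hj1 hjn hg ?_
    intro h6
    subst h6
    interval_cases j <;> simp_all <;> decide
  · have hgpos : 0 < Nat.gcd j n := Nat.gcd_pos_of_pos_left _ hj1
    have hg1 : Nat.gcd j n = 1 := by omega
    have hjlt : j < n := by
      rcases lt_or_eq_of_le hjn with h | h
      · exact h
      · subst h; rw [Nat.gcd_self] at hg1; omega
    have hgsub : Nat.gcd j (n - j) = 1 := by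
      rw [Nat.gcd_sub_self_right hjn]; exact hg1
    rcases eq_or_lt_of_le hj1 with h1 | h1
    · exact h1 ▸ H2' n (n-1) (by omega) (by omega) (by omega) (by omega)
    rcases Nat.even_or_odd j with hje | hjo
    · -- j even, hence n odd
      have hj2 : 2 ∣ j := hje.two_dvd
      have hnodd : n % 2 = 1 := by
        by_contra h
        have : 2 ∣ Nat.gcd j n := Nat.dvd_gcd hj2 (by omega)
        omega
      by_cases hj2' : j = 2
      · subst hj2'
        obtain ⟨hga, hb⟩ := gcd_two 2 (n-1) (by omega) (by omega) (by omega)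
        exact H4 n 2 (n-1) 1 (by omega) (by omega) (by omega) (by omega) (by omega)
          (by omega) (by omega) (by omega) (by simp) (by omega) hga (fun _ => hb)
      · -- j ≥ 4
        by_cases hn3 : n - j = 3
        · obtain ⟨ha, hb⟩ := gcd_two j (j+2) hj2 (by omega) (by omega)
          exact H4 n j (j+2) 1 (by omega) (le_of_lt (by omega)) (by omega) (by omega)
            (by omega) (by omega) (by omega) (by omega) (by simp) (by omega) ha (fun _ => hb)
        · refine H4 n j j (n-j) (by omega) le_rfl (by omega) (by omega) (by omega)
            (by omega) ?_ ?_ hgsub (by omega) (by rw [Nat.gcd_self]; omega)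
            (by rw [Nat.gcd_self]; omega)
          · omega
          · omega
    · -- j odd, j ≥ 3
      have hjodd : j % 2 = 1 := Nat.odd_iff.mp hjo
      rcases Nat.even_or_odd n with hne | hno
      · have hneven : n % 2 = 0 := Nat.even_iff.mp hne
        by_cases hj3 : j = 3
        · subst hj3
          have hn6 : n ≠ 6 := by
            intro h; subst h; simp [show Nat.gcd 3 6 = 3 from by decide] at hg1
          have hn8 : n ≠ 8 := by intro h; exact hexc (Or.inr (Or.inl ⟨h, rfl⟩))
          exact H5 n (n-5) (by omega) (by omega) (by omega)
        · -- j odd ≥ 5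
          by_cases hn3 : n - j = 3
          · -- n = j + 3
            have h3j : ¬ 3 ∣ j := by
              intro h
              have : (3 : ℕ) ∣ Nat.gcd j n := Nat.dvd_gcd h (by omega)
              omega
            by_cases hm : j % 3 = 1
            · have hga : 1 < Nat.gcd (j-1) (n-1) := by
                have h := Nat.dvd_gcd (show (3:ℕ) ∣ j - 1 by omega)
                  (show (3:ℕ) ∣ n - 1 by omega)
                have hpos : 0 < Nat.gcd (j-1) (n-1) :=
                  Nat.gcd_pos_of_pos_right _ (by omega)
                omega
              exact H3 n j (n-1) (j-1) (by omega) (by omega) (by omega) (by omega)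
                (by omega) (by omega) (by omega) hga (fun h => absurd h (by omega))
            · -- j % 3 = 2, j ≡ 5 mod 6, j ≥ 11
              have hj5 : j ≠ 5 := by
                intro h; exact hexc (Or.inr (Or.inr ⟨by omega, h⟩))
              have hab : Nat.gcd (j - 6) 9 = 1 := by
                have h3 : ¬ (3 : ℕ) ∣ (j - 6) := by omega
                have hc : Nat.Coprime 3 (j - 6) :=
                  (Nat.Prime.coprime_iff_not_dvd (by norm_num)).mpr h3
                have h9 : (9 : ℕ) = 3 ^ 2 := by norm_num
                have := (hc.pow_left 2).symm
                rwa [← h9] at this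
              refine H6 n j (j-6) 9 (j-6) 6 (by omega) (by omega) (by omega) (by omega)
                le_rfl (by omega) (by omega) (by omega) (by omega) (by omega) (by omega)
                (by omega) hab (by rw [Nat.gcd_self]; omega) (by decide)
                (by omega) (by omega)
          · refine H4 n j j (n-j) (by omega) le_rfl (by omega) (by omega) (by omega)
              (by omega) (by omega) (by omega) hgsub (by omega)
              (by rw [Nat.gcd_self]; omega) (by rw [Nat.gcd_self]; omega)
      · have hnodd : n % 2 = 1 := Nat.odd_iff.mp hno
        obtain ⟨ha, hb⟩ := gcd_two (j-1) (n-1) (by omega) (by omega) (by omega)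
        exact H3 n j (n-1) (j-1) (by omega) (by omega) (by omega) (by omega)
          (by omega) (by omega) (by omega) ha (fun _ => hb)
end
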